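/- arXiv:2410.15867 — 2 statements merged into one kernel-verified Lean document; each statement's English description precedes it below -/
import Mathlib

section
/- Assume (H2), (H3), (H5), (H6). Let t₀ ≥ 0, let t* ∈ (t₀, +∞], and let x : (−∞, t*) → ℝ^n be continuous, bounded on (−∞, t₀], differentiable on (t₀, t*) and satisfying the equations of system (1) for all t ∈ (t₀, t*). Set ‖φ‖ = sup_{s ≤ t₀} |x(s)|, 𝒜(t) = max_i ā_i·(|b_i(t,0)| + |I_i(t)| + |F_i(U⁰_i(t), V⁰_i(t))|) where U⁰_i(t) = Σ_{p=1}^{P} Σ_{j,l=1}^{n} c_{ijlp}(t)·h_{ijlp}(0,0) and V⁰_i(t) = Σ_{p=1}^{P} Σ_{j,l=1}^{n} d_{ijlp}(t)·f_{ijlp}(g_{ijp}(0), G_{ilp}(0)), and ℬ(t) = max_i ā_i·Σ_{p=1}^{P} Σ_{j,l=1}^{n} (ζ_i|c_{ijlp}(t)|(γ¹_{ijlp} + γ²_{ijlp}) + ς_i|d_{ijlp}(t)|(μ¹_{ijlp}ξ_{ijp} + μ²_{ijlp}Ξ_{ilp})). Then for every t ∈ [t₀, t*): sup_{s ≤ t}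 |x(s)| ≤ ‖φ‖ + ∫_{t₀}^{t} 𝒜(v) dv + ∫_{t₀}^{t} ℬ(v)·(‖φ‖ + ∫_{t₀}^{v} 𝒜(r) dr)·exp(∫_{v}^{t} ℬ(r) dr) dv. In particular, if t* < +∞ then x is bounded on (−∞, t*). -/
open MeasureTheory Filter

/-- The data of the Cohen--Grossberg system (1), with `n+1` neurons and `P+1` delay blocks. -/
structure CGData (n P : ℕ) where
  a : Fin (n+1) → ℝ → ℝ → ℝ
  b : Fin (n+1) → ℝ → ℝ → ℝ
  c : Fin (n+1) → Fin (n+1) → Fin (n+1) → Fin (P+1) → ℝ → ℝ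
  d : Fin (n+1) → Fin (n+1) → Fin (n+1) → Fin (P+1) → ℝ → ℝ
  I : Fin (n+1) → ℝ → ℝ
  τ : Fin (n+1) → Fin (n+1) → Fin (P+1) → ℝ → ℝ
  σ : Fin (n+1) → Fin (n+1) → Fin (P+1) → ℝ → ℝ
  F : Fin (n+1) → ℝ → ℝ → ℝ
  h : Fin (n+1) → Fin (n+1) → Fin (n+1) → Fin (P+1) → ℝ → ℝ → ℝ
  f : Fin (n+1) → Fin (n+1) → Fin (n+1) → Fin (P+1) → ℝ → ℝ → ℝ
  g : Fin (n+1) → Fin (n+1) → Fin (P+1) → ℝ → ℝ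
  G : Fin (n+1) → Fin (n+1) → Fin (P+1) → ℝ → ℝ
  η : Fin (n+1) → Fin (n+1) → Fin (P+1) → Measure ℝ
  ρ : Fin (n+1) → Fin (n+1) → Fin (P+1) → Measure ℝ

namespace CGData

variable {n P : ℕ}

/-- `U_i(t,x)`. -/
noncomputable def U (S : CGData n P) (x : Fin (n+1) → ℝ → ℝ) (i : Fin (n+1)) (t : ℝ) : ℝ :=
  ∑ p : Fin (P+1), ∑ j : Fin (n+1), ∑ l : Fin (n+1),
    S.c i j l p t * S.h i j l p (x j (t - S.τ i j p t)) (x l (t - S.σ i l p t))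

/-- `V_i(t,x)`. -/
noncomputable def V (S : CGData n P) (x : Fin (n+1) → ℝ → ℝ) (i : Fin (n+1)) (t : ℝ) : ℝ :=
  ∑ p : Fin (P+1), ∑ j : Fin (n+1), ∑ l : Fin (n+1),
    S.d i j l p t * S.f i j l p
      (∫ s in Set.Iic (0:ℝ), S.g i j p (x j (t + s)) ∂(S.η i j p))
      (∫ s in Set.Iic (0:ℝ), S.G i l p (x l (t + s)) ∂(S.ρ i l p))

/-- Right-hand side of system (1). -/
noncomputable def rhs (S : CGData n P) (x : Fin (n+1) → ℝ → ℝ) (i : Fin (n+1)) (t : ℝ) : ℝ :=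
  S.a i t (x i t) * (-(S.b i t (x i t)) + S.F i (S.U x i t) (S.V x i t) + S.I i t)

/-- Standing regularity assumptions on the data (continuity, positivity of `a`,
nonnegativity of the delays, probability measures supported on `(-∞,0]`). -/
def Regular (S : CGData n P) : Prop :=
  (∀ i, ContinuousOn (fun q : ℝ × ℝ => S.a i q.1 q.2) (Set.Ici 0 ×ˢ Set.univ)) ∧
  (∀ i, ∀ t ≥ (0:ℝ), ∀ v, 0 < S.a i t v) ∧
  (∀ i, ContinuousOn (fun q : ℝ × ℝ => S.b i q.1 q.2) (Set.Ici 0 ×ˢ Set.univ)) ∧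
  (∀ i j l p, ContinuousOn (S.c i j l p) (Set.Ici 0)) ∧
  (∀ i j l p, ContinuousOn (S.d i j l p) (Set.Ici 0)) ∧
  (∀ i, ContinuousOn (S.I i) (Set.Ici 0)) ∧
  (∀ i j p, ContinuousOn (S.τ i j p) (Set.Ici 0)) ∧
  (∀ i l p, ContinuousOn (S.σ i l p) (Set.Ici 0)) ∧
  (∀ i j p, ∀ t ≥ (0:ℝ), 0 ≤ S.τ i j p t) ∧
  (∀ i l p, ∀ t ≥ (0:ℝ), 0 ≤ S.σ i l p t) ∧
  (∀ i, Continuous (fun q : ℝ × ℝ => S.F i q.1 q.2)) ∧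
  (∀ i j l p, Continuous (fun q : ℝ × ℝ => S.h i j l p q.1 q.2)) ∧
  (∀ i j l p, Continuous (fun q : ℝ × ℝ => S.f i j l p q.1 q.2)) ∧
  (∀ i j p, Continuous (S.g i j p)) ∧
  (∀ i l p, Continuous (S.G i l p)) ∧
  (∀ i j p, IsProbabilityMeasure (S.η i j p) ∧ S.η i j p (Set.Ioi 0) = 0) ∧
  (∀ i l p, IsProbabilityMeasure (S.ρ i l p) ∧ S.ρ i l p (Set.Ioi 0) = 0)

/-- A solution of (1) on `ℝ` with bounded initial condition at `t₀`. -/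
def IsSolution (S : CGData n P) (t₀ : ℝ) (x : Fin (n+1) → ℝ → ℝ) : Prop :=
  (∀ i, Continuous (x i)) ∧
  (∃ M, ∀ i, ∀ t ≤ t₀, |x i t| ≤ M) ∧
  (∀ i, ∀ t, t₀ < t → HasDerivAt (x i) (S.rhs x i t) t)

/-- Hypothesis (H1): boundedness of the coefficients. -/
def H1 (S : CGData n P) : Prop :=
  (∀ i j l p, ∃ M, ∀ t ≥ (0:ℝ), |S.c i j l p t| ≤ M) ∧
  (∀ i j l p, ∃ M, ∀ t ≥ (0:ℝ), |S.d i j l p t| ≤ M) ∧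
  (∀ i, ∃ M, ∀ t ≥ (0:ℝ), |S.I i t| ≤ M) ∧
  (∀ i, ∀ u : ℝ, ∃ M, ∀ t ≥ (0:ℝ), |S.b i t u| ≤ M)

/-- Hypothesis (H2). -/
def H2 (S : CGData n P) (aL aU : Fin (n+1) → ℝ) (A : Fin (n+1) → ℝ → ℝ) : Prop :=
  (∀ i, 0 < aL i) ∧ (∀ i, aL i ≤ aU i) ∧
  (∀ i, ∀ t ≥ (0:ℝ), ∀ v, aL i ≤ S.a i t v ∧ S.a i t v ≤ aU i) ∧
  (∀ i, ∀ v : ℝ, ∀ t ≥ (0:ℝ),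
    ∃ da, HasDerivAt (fun s => S.a i s v) da t ∧ A i t * (S.a i t v) ^ 2 ≤ da)

/-- Hypothesis (H3). -/
def H3 (S : CGData n P) (β : Fin (n+1) → ℝ → ℝ) : Prop :=
  (∀ i, ContinuousOn (β i) (Set.Ici 0)) ∧
  (∀ i, ∀ t ≥ (0:ℝ), 0 ≤ β i t) ∧
  (∀ i, ∀ t ≥ (0:ℝ), ∀ u v : ℝ, u ≠ v → β i t ≤ (S.b i t u - S.b i t v) / (u - v))

/-- Hypothesis (H4): unbounded delays eventually dominated by `t`. -/
def H4 (S : CGData n P) : Prop :=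
  (∀ i j p, Tendsto (fun t => t - S.τ i j p t) atTop atTop) ∧
  (∀ i l p, Tendsto (fun t => t - S.σ i l p t) atTop atTop)

/-- Hypothesis (H5). -/
def H5 (S : CGData n P)
    (γ1 γ2 μ1 μ2 : Fin (n+1) → Fin (n+1) → Fin (n+1) → Fin (P+1) → ℝ) : Prop :=
  (∀ i j l p, 0 < γ1 i j l p ∧ 0 < γ2 i j l p ∧ 0 < μ1 i j l p ∧ 0 < μ2 i j l p) ∧
  (∀ i j l p u1 u2 v1 v2,
    |S.h i j l p u1 u2 - S.h i j l p v1 v2| ≤ γ1 i j l p * |u1 - v1| + γ2 i j l p * |u2 - v2|) ∧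
  (∀ i j l p u1 u2 v1 v2,
    |S.f i j l p u1 u2 - S.f i j l p v1 v2| ≤ μ1 i j l p * |u1 - v1| + μ2 i j l p * |u2 - v2|)

/-- Hypothesis (H6). -/
def H6 (S : CGData n P) (ξ Ξ : Fin (n+1) → Fin (n+1) → Fin (P+1) → ℝ)
    (ζ ς : Fin (n+1) → ℝ) : Prop :=
  (∀ i j p, 0 < ξ i j p) ∧ (∀ i l p, 0 < Ξ i l p) ∧ (∀ i, 0 < ζ i ∧ 0 < ς i) ∧
  (∀ i j p u v, |S.g i j p u - S.g i j p v| ≤ ξ i j p * |u - v|) ∧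
  (∀ i l p u v, |S.G i l p u - S.G i l p v| ≤ Ξ i l p * |u - v|) ∧
  (∀ i u1 u2 v1 v2, |S.F i u1 u2 - S.F i v1 v2| ≤ ζ i * |u1 - v1| + ς i * |u2 - v2|)

/-- The expression whose `limsup` is required to be negative in hypothesis (H7). -/
noncomputable def H7expr (S : CGData n P) (aL aU : Fin (n+1) → ℝ) (A : Fin (n+1) → ℝ → ℝ)
    (β : Fin (n+1) → ℝ → ℝ)
    (γ1 γ2 μ1 μ2 : Fin (n+1) → Fin (n+1) → Fin (n+1) → Fin (P+1) → ℝ)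
    (ξ Ξ : Fin (n+1) → Fin (n+1) → Fin (P+1) → ℝ) (ζ ς : Fin (n+1) → ℝ)
    (dv : Fin (n+1) → ℝ) (i : Fin (n+1)) (t : ℝ) : ℝ :=
  -(aL i * (β i t + A i t)) +
    ∑ p : Fin (P+1), ∑ j : Fin (n+1), ∑ l : Fin (n+1),
      (ζ i * |S.c i j l p t| *
          (aU j * (dv j / dv i) * γ1 i j l p + aU l * (dv l / dv i) * γ2 i j l p)
        + ς i * |S.d i j l p t| *
          (aU j * (dv j / dv i) * ξ i j p * μ1 i j l p
            + aU l * (dv l / dv i) * Ξ i l p * μ2 i j l p))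

/-- Hypothesis (H7). -/
def H7 (S : CGData n P) (aL aU : Fin (n+1) → ℝ) (A : Fin (n+1) → ℝ → ℝ)
    (β : Fin (n+1) → ℝ → ℝ)
    (γ1 γ2 μ1 μ2 : Fin (n+1) → Fin (n+1) → Fin (n+1) → Fin (P+1) → ℝ)
    (ξ Ξ : Fin (n+1) → Fin (n+1) → Fin (P+1) → ℝ) (ζ ς : Fin (n+1) → ℝ)
    (dv : Fin (n+1) → ℝ) : Prop :=
  (∀ i, 0 < dv i) ∧
  (∀ i, limsup (fun t => S.H7expr aL aU A β γ1 γ2 μ1 μ2 ξ Ξ ζ ς dv i t) atTop < 0)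

/-- The function `𝒜(t)` of Lemma 3.1. -/
noncomputable def calA (S : CGData n P) (aU : Fin (n+1) → ℝ) (t : ℝ) : ℝ :=
  Finset.univ.sup' Finset.univ_nonempty (fun i : Fin (n+1) =>
    aU i * (|S.b i t 0| + |S.I i t| +
      |S.F i
        (∑ p : Fin (P+1), ∑ j : Fin (n+1), ∑ l : Fin (n+1),
          S.c i j l p t * S.h i j l p 0 0)
        (∑ p : Fin (P+1), ∑ j : Fin (n+1), ∑ l : Fin (n+1),
          S.d i j l p t * S.f i j l p (S.g i j p 0) (S.G i l p 0))|))

/-- The function `ℬ(t)` of Lemma 3.1. -/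
noncomputable def calB (S : CGData n P) (aU : Fin (n+1) → ℝ)
    (γ1 γ2 μ1 μ2 : Fin (n+1) → Fin (n+1) → Fin (n+1) → Fin (P+1) → ℝ)
    (ξ Ξ : Fin (n+1) → Fin (n+1) → Fin (P+1) → ℝ) (ζ ς : Fin (n+1) → ℝ) (t : ℝ) : ℝ :=
  Finset.univ.sup' Finset.univ_nonempty (fun i : Fin (n+1) =>
    aU i * ∑ p : Fin (P+1), ∑ j : Fin (n+1), ∑ l : Fin (n+1),
      (ζ i * |S.c i j l p t| * (γ1 i j l p + γ2 i j l p)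
        + ς i * |S.d i j l p t| * (μ1 i j l p * ξ i j p + μ2 i j l p * Ξ i l p)))

end CGData

open CGData


open Topology

lemma cg_setIntegral_bound (μ : Measure ℝ) (hprob : IsProbabilityMeasure μ)
    (hsupp : μ (Set.Ioi 0) = 0) (g : ℝ → ℝ) (ξ U : ℝ) (hξ : 0 ≤ ξ) (hU : 0 ≤ U)
    (w : ℝ → ℝ) (t : ℝ) (hw : ContinuousOn (fun s => w (t + s)) (Set.Iic 0))
    (hwb : ∀ s ≤ t, |w s| ≤ U)
    (hg : ∀ u v : ℝ, |g u - g v| ≤ ξ * |u - v|) :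
    |(∫ s in Set.Iic (0:ℝ), g (w (t + s)) ∂μ) - g 0| ≤ ξ * U := by
  haveI := hprob
  have hIic : μ (Set.Iic 0) = 1 := by
    have h1 := measure_add_measure_compl (μ := μ) (measurableSet_Iic (a := (0:ℝ)))
    rw [Set.compl_Iic, hsupp, add_zero, measure_univ] at h1
    exact h1
  have hgc : Continuous g := by
    have hL : LipschitzWith (Real.toNNReal ξ) g := by
      refine LipschitzWith.of_dist_le_mul fun u v => ?_
      rw [Real.dist_eq, Real.dist_eq, Real.coe_toNNReal ξ hξ]
      exact hg u v
    exact hL.continuous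
  have hbound : ∀ s ∈ Set.Iic (0:ℝ), |g (w (t + s)) - g 0| ≤ ξ * U := by
    intro s hs
    have h1 : |w (t + s)| ≤ U := hwb _ (by simpa using add_le_add_left (hs : s ≤ 0) t)
    calc |g (w (t+s)) - g 0| ≤ ξ * |w (t+s) - 0| := hg _ _
      _ = ξ * |w (t+s)| := by rw [sub_zero]
      _ ≤ ξ * U := mul_le_mul_of_nonneg_left h1 hξ
  have hfm : AEStronglyMeasurable (fun s => g (w (t + s))) (μ.restrict (Set.Iic 0)) :=
    (hgc.comp_continuousOn hw).aestronglyMeasurable measurableSet_Iic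
  have hfi : Integrable (fun s => g (w (t + s))) (μ.restrict (Set.Iic 0)) := by
    refine Integrable.mono' (integrable_const (ξ * U + |g 0|)) hfm ?_
    refine (ae_restrict_iff' measurableSet_Iic).2 (Filter.Eventually.of_forall fun s hs => ?_)
    have h2 := hbound s hs
    have h3 : |g (w (t+s))| ≤ ξ * U + |g 0| := by
      calc |g (w (t+s))| = |(g (w (t+s)) - g 0) + g 0| := by rw [sub_add_cancel]
        _ ≤ |g (w (t+s)) - g 0| + |g 0| := abs_add_le _ _
        _ ≤ ξ * U + |g 0| := by linarith
    simpa [Real.norm_eq_abs] using h3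
  have h0 : ∫ _ in Set.Iic (0:ℝ), g 0 ∂μ = g 0 := by
    rw [setIntegral_const, measureReal_def, hIic]; simp
  have hsub : (∫ s in Set.Iic (0:ℝ), g (w (t + s)) ∂μ) - g 0
      = ∫ s in Set.Iic (0:ℝ), (g (w (t + s)) - g 0) ∂μ := by
    rw [integral_sub hfi (integrable_const _), h0]
  rw [hsub]
  have hb2 : ∀ᵐ s ∂(μ.restrict (Set.Iic 0)), ‖g (w (t+s)) - g 0‖ ≤ ξ * U :=
    (ae_restrict_iff' measurableSet_Iic).2 (Filter.Eventually.of_forall fun s hs => by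
      simpa [Real.norm_eq_abs] using hbound s hs)
  have h4 := norm_integral_le_of_norm_le_const hb2
  simpa [Real.norm_eq_abs, Measure.restrict_apply_univ, measureReal_def, hIic] using h4

set_option maxHeartbeats 4000000 in
/-- Lemma 3.1 (quantitative form): under (H2), (H3), (H5), (H6), a noncontinuable solution
of system (1) on `(-∞, t*)` with bounded initial condition at `t₀` satisfies a
Gronwall-type a priori bound; in particular if `t* < +∞` the solution is bounded. -/
theorem gronwall_bound_on_maximal_interval {n P : ℕ} (S : CGData n P)
    (aL aU : Fin (n+1) → ℝ) (A : Fin (n+1) → ℝ → ℝ) (β : Fin (n+1) → ℝ → ℝ)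
    (γ1 γ2 μ1 μ2 : Fin (n+1) → Fin (n+1) → Fin (n+1) → Fin (P+1) → ℝ)
    (ξ Ξ : Fin (n+1) → Fin (n+1) → Fin (P+1) → ℝ) (ζ ς : Fin (n+1) → ℝ)
    (hreg : S.Regular)
    (h2 : S.H2 aL aU A) (h3 : S.H3 β)
    (h5 : S.H5 γ1 γ2 μ1 μ2) (h6 : S.H6 ξ Ξ ζ ς)
    (t₀ : ℝ) (ht₀ : 0 ≤ t₀) (tstar : EReal) (htstar : (t₀ : EReal) < tstar)
    (x : Fin (n+1) → ℝ → ℝ)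
    (hxc : ∀ i, ContinuousOn (x i) {t : ℝ | (t : EReal) < tstar})
    (hxb : ∃ M, ∀ i, ∀ t ≤ t₀, |x i t| ≤ M)
    (hxd : ∀ i, ∀ t : ℝ, t₀ < t → (t : EReal) < tstar → HasDerivAt (x i) (S.rhs x i t) t) :
    (∀ t : ℝ, t₀ ≤ t → (t : EReal) < tstar →
      sSup {r : ℝ | ∃ i : Fin (n+1), ∃ s : ℝ, s ≤ t ∧ r = |x i s|} ≤
        sSup {r : ℝ | ∃ i : Fin (n+1), ∃ s : ℝ, s ≤ t₀ ∧ r = |x i s|}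
        + (∫ v in t₀..t, calA S aU v)
        + ∫ v in t₀..t, calB S aU γ1 γ2 μ1 μ2 ξ Ξ ζ ς v *
            (sSup {r : ℝ | ∃ i : Fin (n+1), ∃ s : ℝ, s ≤ t₀ ∧ r = |x i s|}
              + ∫ r in t₀..v, calA S aU r) *
            Real.exp (∫ r in v..t, calB S aU γ1 γ2 μ1 μ2 ξ Ξ ζ ς r)) ∧
    (tstar ≠ ⊤ → ∃ M, ∀ i, ∀ t : ℝ, (t : EReal) < tstar → |x i t| ≤ M) := by
  obtain ⟨M, hM⟩ := hxb
  obtain ⟨hacont, hapos, hbcont, hccont, hdcont, hIcont, hτcont, hσcont, hτnn, hσnn,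
    hFcont, hhcont, hfcont, hgcont, hGcont, hη, hρ⟩ := hreg
  obtain ⟨haL, haLU, haB, -⟩ := h2
  obtain ⟨hβc, hβnn, hβ⟩ := h3
  obtain ⟨hpos5, hh5, hf5⟩ := h5
  obtain ⟨hξ6, hΞ6, hζς, hg6, hG6, hF6⟩ := h6
  -- the open domain
  have hopen : IsOpen {u : ℝ | (u : EReal) < tstar} :=
    IsOpen.preimage continuous_coe_real_ereal isOpen_Iio
  have hxCA : ∀ i (s : ℝ), (s : EReal) < tstar → ContinuousAt (x i) s := fun i s hs =>
    (hxc i).continuousAt (hopen.mem_nhds hs)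
  -- φn
  set φn := sSup {r : ℝ | ∃ i : Fin (n+1), ∃ s : ℝ, s ≤ t₀ ∧ r = |x i s|} with hφn
  have hφbdd : BddAbove {r : ℝ | ∃ i : Fin (n+1), ∃ s : ℝ, s ≤ t₀ ∧ r = |x i s|} := by
    refine ⟨M, ?_⟩; rintro r ⟨i, s, hs, rfl⟩; exact hM i s hs
  have hφub : ∀ i (s : ℝ), s ≤ t₀ → |x i s| ≤ φn := fun i s hs =>
    le_csSup hφbdd ⟨i, s, hs, rfl⟩
  have hφnn : 0 ≤ φn := le_trans (abs_nonneg _) (hφub 0 t₀ le_rfl)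
  -- A0, B0
  set A0 : ℝ → ℝ := fun v => calA S aU (max v 0) with hA0
  set B0 : ℝ → ℝ := fun v => calB S aU γ1 γ2 μ1 μ2 ξ Ξ ζ ς (max v 0) with hB0
  have haUpos : ∀ i, 0 < aU i := fun i => lt_of_lt_of_le (haL i) (haLU i)
  -- continuity of A0, B0
  have hmaxc : Continuous (fun v : ℝ => max v 0) := continuous_id.max continuous_const
  have hmaxmem : ∀ v : ℝ, max v 0 ∈ Set.Ici (0:ℝ) := fun v => le_max_right v 0
  have hbc : ∀ i, Continuous (fun v : ℝ => S.b i (max v 0) 0) := fun i =>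
    (hbcont i).comp_continuous (hmaxc.prodMk continuous_const)
      (fun v => Set.mk_mem_prod (hmaxmem v) (Set.mem_univ _))
  have hIc : ∀ i, Continuous (fun v : ℝ => S.I i (max v 0)) := fun i =>
    (hIcont i).comp_continuous hmaxc hmaxmem
  have hcc : ∀ i j l p, Continuous (fun v : ℝ => S.c i j l p (max v 0)) := fun i j l p =>
    (hccont i j l p).comp_continuous hmaxc hmaxmem
  have hdc : ∀ i j l p, Continuous (fun v : ℝ => S.d i j l p (max v 0)) := fun i j l p =>
    (hdcont i j l p).comp_continuous hmaxc hmaxmem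
  have hU0c : ∀ i, Continuous (fun v : ℝ => ∑ p : Fin (P+1), ∑ j : Fin (n+1), ∑ l : Fin (n+1),
      S.c i j l p (max v 0) * S.h i j l p 0 0) := fun i =>
    continuous_finset_sum _ fun p _ => continuous_finset_sum _ fun j _ =>
      continuous_finset_sum _ fun l _ => (hcc i j l p).mul continuous_const
  have hV0c : ∀ i, Continuous (fun v : ℝ => ∑ p : Fin (P+1), ∑ j : Fin (n+1), ∑ l : Fin (n+1),
      S.d i j l p (max v 0) * S.f i j l p (S.g i j p 0) (S.G i l p 0)) := fun i =>
    continuous_finset_sum _ fun p _ => continuous_finset_sum _ fun j _ =>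
      continuous_finset_sum _ fun l _ => (hdc i j l p).mul continuous_const
  have hA0c : Continuous A0 := by
    rw [hA0]
    simp only [calA]
    refine Continuous.finset_sup'_apply Finset.univ_nonempty fun i _ => ?_
    refine continuous_const.mul ?_
    refine (((hbc i).abs.add (hIc i).abs)).add ?_
    exact ((hFcont i).comp ((hU0c i).prodMk (hV0c i))).abs
  have hB0c : Continuous B0 := by
    rw [hB0]
    simp only [calB]
    refine Continuous.finset_sup'_apply Finset.univ_nonempty fun i _ => ?_
    refine continuous_const.mul ?_
    refine continuous_finset_sum _ fun p _ => continuous_finset_sum _ fun j _ =>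
      continuous_finset_sum _ fun l _ => ?_
    exact ((continuous_const.mul (hcc i j l p).abs).mul continuous_const).add
      ((continuous_const.mul (hdc i j l p).abs).mul continuous_const)
  -- nonnegativity
  have hA0nn : ∀ v, 0 ≤ A0 v := by
    intro v
    rw [hA0]
    refine le_trans ?_ (Finset.le_sup' _ (Finset.mem_univ (0 : Fin (n+1))))
    exact mul_nonneg (haUpos 0).le (by positivity)
  have hB0nn : ∀ v, 0 ≤ B0 v := by
    intro v
    rw [hB0]
    refine le_trans ?_ (Finset.le_sup' _ (Finset.mem_univ (0 : Fin (n+1))))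
    refine mul_nonneg (haUpos 0).le (Finset.sum_nonneg fun p _ => Finset.sum_nonneg fun j _ =>
      Finset.sum_nonneg fun l _ => ?_)
    have h1 := (hpos5 0 j l p).1
    have h2 := (hpos5 0 j l p).2.1
    have h3 := (hpos5 0 j l p).2.2.1
    have h4 := (hpos5 0 j l p).2.2.2
    have h5 := hξ6 0 j p
    have h6 := hΞ6 0 l p
    have h7 := (hζς 0).1
    have h8 := (hζς 0).2
    refine add_nonneg (mul_nonneg (mul_nonneg h7.le (abs_nonneg _)) (by linarith))
      (mul_nonneg (mul_nonneg h8.le (abs_nonneg _)) (by nlinarith))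
  -- key estimate
  have key : ∀ t : ℝ, 0 ≤ t → (t : EReal) < tstar → ∀ Ub : ℝ, 0 ≤ Ub →
      (∀ j s, s ≤ t → |x j s| ≤ Ub) → ∀ i : Fin (n+1),
      (0 ≤ x i t → S.rhs x i t ≤ A0 t + B0 t * Ub) ∧
      (x i t ≤ 0 → -S.rhs x i t ≤ A0 t + B0 t * Ub) := by
    intro t ht0 htst Ub hUb0 hUbb i
    set U0 : ℝ := ∑ p : Fin (P+1), ∑ j : Fin (n+1), ∑ l : Fin (n+1),
      S.c i j l p t * S.h i j l p 0 0 with hU0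
    set V0 : ℝ := ∑ p : Fin (P+1), ∑ j : Fin (n+1), ∑ l : Fin (n+1),
      S.d i j l p t * S.f i j l p (S.g i j p 0) (S.G i l p 0) with hV0
    have hUe : |S.U x i t - U0| ≤ ∑ p : Fin (P+1), ∑ j : Fin (n+1), ∑ l : Fin (n+1),
        |S.c i j l p t| * (γ1 i j l p + γ2 i j l p) * Ub := by
      rw [hU0, CGData.U]
      simp only [← Finset.sum_sub_distrib]
      refine (Finset.abs_sum_le_sum_abs _ _).trans (Finset.sum_le_sum fun p _ => ?_)
      refine (Finset.abs_sum_le_sum_abs _ _).trans (Finset.sum_le_sum fun j _ => ?_)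
      refine (Finset.abs_sum_le_sum_abs _ _).trans (Finset.sum_le_sum fun l _ => ?_)
      rw [← mul_sub, abs_mul]
      have h5 := hh5 i j l p (x j (t - S.τ i j p t)) (x l (t - S.σ i l p t)) 0 0
      rw [sub_zero, sub_zero] at h5
      have e1 : |x j (t - S.τ i j p t)| ≤ Ub := hUbb j _ (sub_le_self t (hτnn i j p t ht0))
      have e2 : |x l (t - S.σ i l p t)| ≤ Ub := hUbb l _ (sub_le_self t (hσnn i l p t ht0))
      have hγ1 := (hpos5 i j l p).1
      have hγ2 := (hpos5 i j l p).2.1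
      have habs := abs_nonneg (S.c i j l p t)
      nlinarith [mul_le_mul_of_nonneg_left h5 habs,
        mul_nonneg habs (mul_nonneg hγ1.le (sub_nonneg.2 e1)),
        mul_nonneg habs (mul_nonneg hγ2.le (sub_nonneg.2 e2))]
    have hVe : |S.V x i t - V0| ≤ ∑ p : Fin (P+1), ∑ j : Fin (n+1), ∑ l : Fin (n+1),
        |S.d i j l p t| * (μ1 i j l p * ξ i j p + μ2 i j l p * Ξ i l p) * Ub := by
      rw [hV0, CGData.V]
      simp only [← Finset.sum_sub_distrib]
      refine (Finset.abs_sum_le_sum_abs _ _).trans (Finset.sum_le_sum fun p _ => ?_)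
      refine (Finset.abs_sum_le_sum_abs _ _).trans (Finset.sum_le_sum fun j _ => ?_)
      refine (Finset.abs_sum_le_sum_abs _ _).trans (Finset.sum_le_sum fun l _ => ?_)
      rw [← mul_sub, abs_mul]
      have hint1 : |(∫ s in Set.Iic (0:ℝ), S.g i j p (x j (t + s)) ∂(S.η i j p)) - S.g i j p 0|
          ≤ ξ i j p * Ub := by
        refine cg_setIntegral_bound _ (hη i j p).1 (hη i j p).2 _ _ _ (hξ6 i j p).le hUb0 _ t
          ?_ (fun s hs => hUbb j s hs) (hg6 i j p)
        exact (hxc j).comp (continuous_const.add continuous_id).continuousOn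
          (fun s hs => lt_of_le_of_lt (EReal.coe_le_coe_iff.2 (by linarith [Set.mem_Iic.1 hs])) htst)
      have hint2 : |(∫ s in Set.Iic (0:ℝ), S.G i l p (x l (t + s)) ∂(S.ρ i l p)) - S.G i l p 0|
          ≤ Ξ i l p * Ub := by
        refine cg_setIntegral_bound _ (hρ i l p).1 (hρ i l p).2 _ _ _ (hΞ6 i l p).le hUb0 _ t
          ?_ (fun s hs => hUbb l s hs) (hG6 i l p)
        exact (hxc l).comp (continuous_const.add continuous_id).continuousOn
          (fun s hs => lt_of_le_of_lt (EReal.coe_le_coe_iff.2 (by linarith [Set.mem_Iic.1 hs])) htst)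
      have h5 := hf5 i j l p (∫ s in Set.Iic (0:ℝ), S.g i j p (x j (t + s)) ∂(S.η i j p))
        (∫ s in Set.Iic (0:ℝ), S.G i l p (x l (t + s)) ∂(S.ρ i l p))
        (S.g i j p 0) (S.G i l p 0)
      have hμ1 := (hpos5 i j l p).2.2.1
      have hμ2 := (hpos5 i j l p).2.2.2
      have habs := abs_nonneg (S.d i j l p t)
      nlinarith [mul_le_mul_of_nonneg_left h5 habs,
        mul_nonneg habs (mul_nonneg hμ1.le (sub_nonneg.2 hint1)),
        mul_nonneg habs (mul_nonneg hμ2.le (sub_nonneg.2 hint2)),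
        mul_le_mul_of_nonneg_left hint1 (mul_nonneg habs hμ1.le),
        mul_le_mul_of_nonneg_left hint2 (mul_nonneg habs hμ2.le)]
    set Wsum : ℝ := ∑ p : Fin (P+1), ∑ j : Fin (n+1), ∑ l : Fin (n+1),
      (ζ i * |S.c i j l p t| * (γ1 i j l p + γ2 i j l p)
        + ς i * |S.d i j l p t| * (μ1 i j l p * ξ i j p + μ2 i j l p * Ξ i l p)) with hWsum
    have hWeq : Wsum = ζ i * (∑ p : Fin (P+1), ∑ j : Fin (n+1), ∑ l : Fin (n+1),
        |S.c i j l p t| * (γ1 i j l p + γ2 i j l p))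
        + ς i * (∑ p : Fin (P+1), ∑ j : Fin (n+1), ∑ l : Fin (n+1),
        |S.d i j l p t| * (μ1 i j l p * ξ i j p + μ2 i j l p * Ξ i l p)) := by
      rw [hWsum, Finset.mul_sum, Finset.mul_sum, ← Finset.sum_add_distrib]
      refine Finset.sum_congr rfl fun p _ => ?_
      rw [Finset.mul_sum, Finset.mul_sum, ← Finset.sum_add_distrib]
      refine Finset.sum_congr rfl fun j _ => ?_
      rw [Finset.mul_sum, Finset.mul_sum, ← Finset.sum_add_distrib]
      refine Finset.sum_congr rfl fun l _ => ?_
      ring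
    have hUe' : |S.U x i t - U0| ≤ (∑ p : Fin (P+1), ∑ j : Fin (n+1), ∑ l : Fin (n+1),
        |S.c i j l p t| * (γ1 i j l p + γ2 i j l p)) * Ub := by
      refine hUe.trans (le_of_eq ?_)
      simp only [Finset.sum_mul]
    have hVe' : |S.V x i t - V0| ≤ (∑ p : Fin (P+1), ∑ j : Fin (n+1), ∑ l : Fin (n+1),
        |S.d i j l p t| * (μ1 i j l p * ξ i j p + μ2 i j l p * Ξ i l p)) * Ub := by
      refine hVe.trans (le_of_eq ?_)
      simp only [Finset.sum_mul]
    have hFb : |S.F i (S.U x i t) (S.V x i t)| ≤ |S.F i U0 V0| + Wsum * Ub := by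
      have h6 := hF6 i (S.U x i t) (S.V x i t) U0 V0
      have habs := abs_sub_abs_le_abs_sub (S.F i (S.U x i t) (S.V x i t)) (S.F i U0 V0)
      have hζp := (hζς i).1
      have hςp := (hζς i).2
      nlinarith [mul_le_mul_of_nonneg_left hUe' hζp.le, mul_le_mul_of_nonneg_left hVe' hςp.le]
    have haA := haB i t ht0 (x i t)
    have hapos' : 0 < S.a i t (x i t) := lt_of_lt_of_le (haL i) haA.1
    have hbase : ∀ E : ℝ, E ≤ |S.b i t 0| + |S.F i (S.U x i t) (S.V x i t)| + |S.I i t| →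
        S.a i t (x i t) * E ≤ A0 t + B0 t * Ub := by
      intro E hE
      have hC0 : (0:ℝ) ≤ |S.b i t 0| + |S.F i (S.U x i t) (S.V x i t)| + |S.I i t| := by positivity
      have h1 : S.a i t (x i t) * E ≤ aU i * (|S.b i t 0| + |S.F i (S.U x i t) (S.V x i t)| + |S.I i t|) :=
        calc S.a i t (x i t) * E
            ≤ S.a i t (x i t) * (|S.b i t 0| + |S.F i (S.U x i t) (S.V x i t)| + |S.I i t|) :=
              mul_le_mul_of_nonneg_left hE hapos'.le
          _ ≤ aU i * (|S.b i t 0| + |S.F i (S.U x i t) (S.V x i t)| + |S.I i t|) :=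
              mul_le_mul_of_nonneg_right haA.2 hC0
      have h2 : aU i * (|S.b i t 0| + |S.F i (S.U x i t) (S.V x i t)| + |S.I i t|)
          ≤ aU i * (|S.b i t 0| + |S.I i t| + |S.F i U0 V0|) + (aU i * Wsum) * Ub := by
        nlinarith [mul_le_mul_of_nonneg_left hFb (haUpos i).le]
      have h3 : aU i * (|S.b i t 0| + |S.I i t| + |S.F i U0 V0|) ≤ A0 t := by
        rw [hA0]
        simp only
        rw [max_eq_left ht0, hU0, hV0]
        exact Finset.le_sup' (fun i' : Fin (n+1) => aU i' * (|S.b i' t 0| + |S.I i' t| +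
          |S.F i' (∑ p : Fin (P+1), ∑ j : Fin (n+1), ∑ l : Fin (n+1), S.c i' j l p t * S.h i' j l p 0 0)
            (∑ p : Fin (P+1), ∑ j : Fin (n+1), ∑ l : Fin (n+1),
              S.d i' j l p t * S.f i' j l p (S.g i' j p 0) (S.G i' l p 0))|)) (Finset.mem_univ i)
      have h4 : (aU i * Wsum) * Ub ≤ B0 t * Ub := by
        refine mul_le_mul_of_nonneg_right ?_ hUb0
        rw [hB0]
        simp only
        rw [max_eq_left ht0, hWsum]
        exact Finset.le_sup' (fun i' : Fin (n+1) => aU i' * ∑ p : Fin (P+1), ∑ j : Fin (n+1), ∑ l : Fin (n+1),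
          (ζ i' * |S.c i' j l p t| * (γ1 i' j l p + γ2 i' j l p)
            + ς i' * |S.d i' j l p t| * (μ1 i' j l p * ξ i' j p + μ2 i' j l p * Ξ i' l p)))
          (Finset.mem_univ i)
      linarith
    constructor
    · intro hge
      have hb0 : 0 ≤ S.b i t (x i t) - S.b i t 0 := by
        rcases eq_or_lt_of_le hge with heq | hlt
        · rw [← heq]; simp
        · have hq := hβ i t ht0 (x i t) 0 (ne_of_gt hlt)
          have heq2 : S.b i t (x i t) - S.b i t 0
              = ((S.b i t (x i t) - S.b i t 0) / (x i t - 0)) * (x i t - 0) :=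
            (div_mul_cancel₀ _ (sub_ne_zero.2 (ne_of_gt hlt))).symm
          rw [heq2]
          exact mul_nonneg (le_trans (hβnn i t ht0) hq) (by linarith)
      have hE : -(S.b i t (x i t)) + S.F i (S.U x i t) (S.V x i t) + S.I i t
          ≤ |S.b i t 0| + |S.F i (S.U x i t) (S.V x i t)| + |S.I i t| := by
        have := le_abs_self (S.I i t)
        have := le_abs_self (S.F i (S.U x i t) (S.V x i t))
        have := neg_le_abs (S.b i t 0)
        linarith
      exact hbase _ hE
    · intro hle
      have hb0 : S.b i t (x i t) - S.b i t 0 ≤ 0 := by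
        rcases eq_or_lt_of_le hle with heq | hlt
        · rw [heq]; simp
        · have hq := hβ i t ht0 (x i t) 0 (ne_of_lt hlt)
          have heq2 : S.b i t (x i t) - S.b i t 0
              = ((S.b i t (x i t) - S.b i t 0) / (x i t - 0)) * (x i t - 0) :=
            (div_mul_cancel₀ _ (sub_ne_zero.2 (ne_of_lt hlt))).symm
          rw [heq2]
          exact mul_nonpos_of_nonneg_of_nonpos (le_trans (hβnn i t ht0) hq) (by linarith)
      have hE : S.b i t (x i t) - S.F i (S.U x i t) (S.V x i t) - S.I i t
          ≤ |S.b i t 0| + |S.F i (S.U x i t) (S.V x i t)| + |S.I i t| := by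
        have := neg_le_abs (S.I i t)
        have := neg_le_abs (S.F i (S.U x i t) (S.V x i t))
        have := le_abs_self (S.b i t 0)
        linarith
      have hrw : -S.rhs x i t = S.a i t (x i t) *
          (S.b i t (x i t) - S.F i (S.U x i t) (S.V x i t) - S.I i t) := by
        rw [CGData.rhs]; ring
      rw [hrw]
      exact hbase _ hE
  -- FTC helper
  have ftc : ∀ (f : ℝ → ℝ), Continuous f → ∀ (a u : ℝ),
      HasDerivAt (fun w => ∫ v in a..w, f v) (f u) u := fun f hf a u =>
    intervalIntegral.integral_hasDerivAt_right (hf.intervalIntegrable _ _)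
      hf.stronglyMeasurable.stronglyMeasurableAtFilter hf.continuousAt
  set R : ℝ → ℝ := fun u => ∫ v in t₀..u, B0 v with hR
  have hRd : ∀ u, HasDerivAt R (B0 u) u := by
    intro u; rw [hR]; exact ftc _ hB0c t₀ u
  have hRcont : Continuous R := continuous_iff_continuousAt.2 fun u => (hRd u).continuousAt
  have hexpRc : Continuous fun v => Real.exp (-(R v)) := Real.continuous_exp.comp hRcont.neg
  have hintc : ∀ ε : ℝ, Continuous fun v => (A0 v + ε) * Real.exp (-(R v)) := fun ε =>
    (hA0c.add continuous_const).mul hexpRc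
  set yE : ℝ → ℝ → ℝ := fun ε u =>
    Real.exp (R u) * (φn + ε + ∫ v in t₀..u, (A0 v + ε) * Real.exp (-(R v))) with hyE
  have hRt₀ : R t₀ = 0 := by rw [hR]; exact intervalIntegral.integral_same
  have hyt₀ : ∀ ε, yE ε t₀ = φn + ε := by
    intro ε
    rw [hyE]
    simp only [hRt₀, intervalIntegral.integral_same, Real.exp_zero, one_mul, add_zero]
  have hyd : ∀ ε u, HasDerivAt (yE ε) (B0 u * yE ε u + (A0 u + ε)) u := by
    intro ε u
    have h1 : HasDerivAt (fun v => Real.exp (R v)) (Real.exp (R u) * B0 u) u := (hRd u).exp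
    have h2 : HasDerivAt (fun v => φn + ε + ∫ w in t₀..v, (A0 w + ε) * Real.exp (-(R w)))
        ((A0 u + ε) * Real.exp (-(R u))) u := (ftc _ (hintc ε) t₀ u).const_add _
    have h3 := h1.mul h2
    have he : Real.exp (R u) * Real.exp (-(R u)) = 1 := by
      rw [← Real.exp_add]; simp
    have h4 : HasDerivAt (yE ε) (Real.exp (R u) * B0 u *
        (φn + ε + ∫ w in t₀..u, (A0 w + ε) * Real.exp (-(R w)))
        + Real.exp (R u) * ((A0 u + ε) * Real.exp (-(R u)))) u := by
      rw [hyE]; exact h3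
    convert h4 using 1
    simp only [hyE]
    linear_combination (-(A0 u + ε)) * he
  have hRmono : ∀ u w : ℝ, u ≤ w → R u ≤ R w := by
    intro u w huw
    have h2 := intervalIntegral.integral_add_adjacent_intervals (μ := MeasureTheory.volume)
      (a := t₀) (b := u) (c := w)
      (hB0c.intervalIntegrable _ _) (hB0c.intervalIntegrable _ _)
    have hnn : 0 ≤ ∫ v in u..w, B0 v :=
      intervalIntegral.integral_nonneg huw fun v _ => hB0nn v
    simp only [hR]
    linarith
  have hJmono : ∀ ε : ℝ, 0 ≤ ε → ∀ u w : ℝ, u ≤ w →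
      (∫ v in t₀..u, (A0 v + ε) * Real.exp (-(R v)))
        ≤ ∫ v in t₀..w, (A0 v + ε) * Real.exp (-(R v)) := by
    intro ε hε u w huw
    have h2 := intervalIntegral.integral_add_adjacent_intervals (μ := MeasureTheory.volume)
      (a := t₀) (b := u) (c := w)
      ((hintc ε).intervalIntegrable _ _) ((hintc ε).intervalIntegrable _ _)
    have hnn : 0 ≤ ∫ v in u..w, (A0 v + ε) * Real.exp (-(R v)) :=
      intervalIntegral.integral_nonneg huw fun v _ =>
        mul_nonneg (by linarith [hA0nn v]) (Real.exp_nonneg _)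
    linarith
  have hJnn : ∀ ε : ℝ, 0 ≤ ε → ∀ u, t₀ ≤ u →
      0 ≤ ∫ v in t₀..u, (A0 v + ε) * Real.exp (-(R v)) := fun ε hε u hu =>
    intervalIntegral.integral_nonneg hu fun v _ =>
      mul_nonneg (by linarith [hA0nn v]) (Real.exp_nonneg _)
  have hymono : ∀ ε : ℝ, 0 ≤ ε → ∀ u w : ℝ, t₀ ≤ u → u ≤ w → yE ε u ≤ yE ε w := by
    intro ε hε u w hu huw
    rw [hyE]
    simp only
    refine mul_le_mul (Real.exp_le_exp.2 (hRmono u w huw))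
      (by linarith [hJmono ε hε u w huw]) ?_ (Real.exp_nonneg _)
    have := hJnn ε hε u hu
    linarith
  -- the continuous-induction core
  have main : ∀ ε : ℝ, 0 < ε → ∀ b : ℝ, t₀ ≤ b → (b : EReal) < tstar →
      ∀ s, s ∈ Set.Icc t₀ b → ∀ i, |x i s| ≤ yE ε s := by
    intro ε hε b hb hbst
    set E : Set ℝ := {c | c ∈ Set.Icc t₀ b ∧ ∀ s ∈ Set.Icc t₀ c, ∀ i, |x i s| ≤ yE ε s}
      with hEdef
    have h0E : t₀ ∈ E := by
      refine ⟨⟨le_rfl, hb⟩, fun s hs i => ?_⟩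
      have hst : s = t₀ := le_antisymm hs.2 hs.1
      rw [hst, hyt₀ ε]
      linarith [hφub i t₀ le_rfl]
    have hbddE : BddAbove E := ⟨b, fun z hz => hz.1.2⟩
    have hneE : E.Nonempty := ⟨t₀, h0E⟩
    have hc1 : t₀ ≤ sSup E := le_csSup hbddE h0E
    have hc2 : sSup E ≤ b := csSup_le hneE fun z hz => hz.1.2
    have hcst : ((sSup E : ℝ) : EReal) < tstar :=
      lt_of_le_of_lt (EReal.coe_le_coe_iff.2 hc2) hbst
    have hcP : ∀ s ∈ Set.Icc t₀ (sSup E), ∀ i, |x i s| ≤ yE ε s := by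
      intro s hs i
      rcases eq_or_lt_of_le hs.2 with heq | hlt
      · -- s = sSup E : limit from the left (or s = t₀)
        rcases eq_or_lt_of_le hs.1 with heq0 | hlt0
        · rw [← heq0, hyt₀ ε]; linarith [hφub i t₀ le_rfl]
        · have hsts : ((s : ℝ) : EReal) < tstar := by rw [heq]; exact hcst
          have hsc : ContinuousAt (x i) s := hxCA i s hsts
          have hyc : ContinuousAt (yE ε) s := (hyd ε s).continuousAt
          have htnd : Tendsto (fun u => yE ε u - |x i u|) (𝓝[<] s)
              (𝓝 (yE ε s - |x i s|)) := ((hyc.sub hsc.abs).continuousWithinAt)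
          refine sub_nonneg.1 (ge_of_tendsto htnd ?_)
          filter_upwards [Ioo_mem_nhdsLT_of_mem (⟨hlt0, le_rfl⟩ : s ∈ Set.Ioc t₀ s)] with u hu
          obtain ⟨z, hzE, hz⟩ := exists_lt_of_lt_csSup hneE (lt_of_lt_of_le hu.2 heq.le)
          exact sub_nonneg.2 (hzE.2 u ⟨hu.1.le, hz.le⟩ i)
      · obtain ⟨z, hzE, hz⟩ := exists_lt_of_lt_csSup hneE hlt
        exact hzE.2 s ⟨hs.1, hz.le⟩ i
    have hceq : sSup E = b := by
      by_contra hne'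
      have hcb : sSup E < b := lt_of_le_of_ne hc2 hne'
      have hstep : ∀ i : Fin (n+1), ∃ δ : ℝ, 0 < δ ∧ sSup E + δ ≤ b ∧
          ∀ s ∈ Set.Ioc (sSup E) (sSup E + δ), |x i s| ≤ yE ε s := by
        intro i
        have hiP : |x i (sSup E)| ≤ yE ε (sSup E) := hcP _ ⟨hc1, le_rfl⟩ i
        rcases lt_or_eq_of_le hiP with hlt | heq
        · -- strict inequality at sSup E : use continuity
          have hG : ContinuousAt (fun u => yE ε u - |x i u|) (sSup E) :=
            ((hyd ε _).continuousAt).sub (hxCA i _ hcst).abs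
          have hev : ∀ᶠ u in 𝓝 (sSup E), 0 < yE ε u - |x i u| :=
            hG.eventually (lt_mem_nhds (show (0:ℝ) < yE ε (sSup E) - |x i (sSup E)| by linarith))
          obtain ⟨δ', hδ', hball⟩ := Metric.eventually_nhds_iff.1 hev
          refine ⟨min (δ'/2) (b - sSup E), lt_min (by linarith) (by linarith),
            by have := min_le_right (δ'/2) (b - sSup E); linarith, fun s hs => ?_⟩
          have hd : dist s (sSup E) < δ' := by
            rw [Real.dist_eq, abs_of_pos (by linarith [hs.1] : (0:ℝ) < s - sSup E)]
            have := min_le_left (δ'/2) (b - sSup E)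
            have := hs.2
            linarith
          linarith [hball hd]
        · -- touching point : use the differential inequality
          have hcpos : 0 < yE ε (sSup E) := by
            have h1 := hymono ε hε.le t₀ (sSup E) le_rfl hc1
            rw [hyt₀ ε] at h1
            linarith
          have hct₀ : t₀ < sSup E := by
            rcases eq_or_lt_of_le hc1 with h | h
            · exfalso
              have h1 := hφub i t₀ le_rfl
              rw [← h] at heq
              rw [hyt₀ ε] at heq
              linarith
            · exact h
          have hder := hxd i (sSup E) hct₀ hcst
          have hUball : ∀ j s, s ≤ sSup E → |x j s| ≤ yE ε (sSup E) := by
            intro j s hs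
            rcases le_or_gt s t₀ with h | h
            · have h1 := hymono ε hε.le t₀ (sSup E) le_rfl hc1
              rw [hyt₀ ε] at h1
              have := hφub j s h
              linarith
            · exact (hcP s ⟨h.le, hs⟩ j).trans (hymono ε hε.le s (sSup E) h.le hs)
          have hkey := key (sSup E) (le_trans ht₀ hc1) hcst (yE ε (sSup E)) hcpos.le hUball i
          have hyd' := hyd ε (sSup E)
          rcases lt_trichotomy (x i (sSup E)) 0 with hsgn | hsgn | hsgn
          · -- negative case
            have hd1 : -S.rhs x i (sSup E) ≤ A0 (sSup E) + B0 (sSup E) * yE ε (sSup E) :=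
              hkey.2 hsgn.le
            have habs2 : -x i (sSup E) = yE ε (sSup E) := by
              rw [← abs_of_neg hsgn]; exact heq
            have hg : HasDerivAt (fun u => -x i u - yE ε u)
                (-S.rhs x i (sSup E) - (B0 (sSup E) * yE ε (sSup E) + (A0 (sSup E) + ε)))
                (sSup E) := hder.neg.sub hyd'
            have hDneg : -S.rhs x i (sSup E)
                - (B0 (sSup E) * yE ε (sSup E) + (A0 (sSup E) + ε)) < 0 := by linarith
            have hslope := (hasDerivAt_iff_tendsto_slope.1 hg).eventually (gt_mem_nhds hDneg)
            have hslope2 : ∀ᶠ u in 𝓝[>] (sSup E),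
                slope (fun u => -x i u - yE ε u) (sSup E) u < 0 :=
              hslope.filter_mono (nhdsWithin_mono _ fun u hu => (ne_of_gt hu : u ≠ sSup E))
            have hxev : ∀ᶠ u in 𝓝[>] (sSup E), x i u < 0 :=
              ((hxCA i _ hcst).eventually (gt_mem_nhds hsgn)).filter_mono nhdsWithin_le_nhds
            obtain ⟨w, hw, hsub⟩ := mem_nhdsGT_iff_exists_Ioo_subset.1
              (hslope2.and hxev)
            simp only [Set.mem_Ioi] at hw
            refine ⟨min ((w - sSup E)/2) (b - sSup E),
              lt_min (by linarith) (by linarith),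
              by have := min_le_right ((w - sSup E)/2) (b - sSup E); linarith,
              fun s hs => ?_⟩
            have hm2 := min_le_left ((w - sSup E)/2) (b - sSup E)
            have hsIoo : s ∈ Set.Ioo (sSup E) w := ⟨hs.1, by linarith [hs.2]⟩
            obtain ⟨hsl, hxn⟩ := hsub hsIoo
            rw [slope_def_field] at hsl
            have hden : (0:ℝ) < s - sSup E := by linarith [hs.1]
            have hnum : (-x i s - yE ε s) - (-x i (sSup E) - yE ε (sSup E)) < 0 := by
              by_contra hge'
              push_neg at hge'
              have := div_nonneg hge' hden.le
              linarith
            rw [abs_of_neg hxn]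
            linarith
          · exfalso
            rw [hsgn] at heq
            simp only [abs_zero] at heq
            linarith
          · -- positive case
            have hd1 : S.rhs x i (sSup E) ≤ A0 (sSup E) + B0 (sSup E) * yE ε (sSup E) :=
              hkey.1 hsgn.le
            have habs2 : x i (sSup E) = yE ε (sSup E) := by
              rw [← abs_of_pos hsgn]; exact heq
            have hg : HasDerivAt (fun u => x i u - yE ε u)
                (S.rhs x i (sSup E) - (B0 (sSup E) * yE ε (sSup E) + (A0 (sSup E) + ε)))
                (sSup E) := hder.sub hyd'
            have hDneg : S.rhs x i (sSup E)
                - (B0 (sSup E) * yE ε (sSup E) + (A0 (sSup E) + ε)) < 0 := by linarith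
            have hslope := (hasDerivAt_iff_tendsto_slope.1 hg).eventually (gt_mem_nhds hDneg)
            have hslope2 : ∀ᶠ u in 𝓝[>] (sSup E),
                slope (fun u => x i u - yE ε u) (sSup E) u < 0 :=
              hslope.filter_mono (nhdsWithin_mono _ fun u hu => (ne_of_gt hu : u ≠ sSup E))
            have hxev : ∀ᶠ u in 𝓝[>] (sSup E), 0 < x i u :=
              ((hxCA i _ hcst).eventually (lt_mem_nhds hsgn)).filter_mono nhdsWithin_le_nhds
            obtain ⟨w, hw, hsub⟩ := mem_nhdsGT_iff_exists_Ioo_subset.1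
              (hslope2.and hxev)
            simp only [Set.mem_Ioi] at hw
            refine ⟨min ((w - sSup E)/2) (b - sSup E),
              lt_min (by linarith) (by linarith),
              by have := min_le_right ((w - sSup E)/2) (b - sSup E); linarith,
              fun s hs => ?_⟩
            have hm2 := min_le_left ((w - sSup E)/2) (b - sSup E)
            have hsIoo : s ∈ Set.Ioo (sSup E) w := ⟨hs.1, by linarith [hs.2]⟩
            obtain ⟨hsl, hxp⟩ := hsub hsIoo
            rw [slope_def_field] at hsl
            have hden : (0:ℝ) < s - sSup E := by linarith [hs.1]
            have hnum : (x i s - yE ε s) - (x i (sSup E) - yE ε (sSup E)) < 0 := by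
              by_contra hge'
              push_neg at hge'
              have := div_nonneg hge' hden.le
              linarith
            rw [abs_of_pos hxp]
            linarith
      choose δf hδf using hstep
      have hδpos : 0 < Finset.univ.inf' Finset.univ_nonempty δf :=
        (Finset.lt_inf'_iff _).2 fun i _ => (hδf i).1
      have hEmem : sSup E + Finset.univ.inf' Finset.univ_nonempty δf ∈ E := by
        refine ⟨⟨by linarith, ?_⟩, fun s hs i => ?_⟩
        · have h1 := Finset.inf'_le δf (Finset.mem_univ (0 : Fin (n+1)))
          have := (hδf 0).2.1
          linarith
        · rcases le_or_gt s (sSup E) with h | h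
          · exact hcP s ⟨hs.1, h⟩ i
          · refine (hδf i).2.2 s ⟨h, ?_⟩
            have h1 := Finset.inf'_le δf (Finset.mem_univ i)
            have := hs.2
            linarith
      have := le_csSup hbddE hEmem
      linarith
    intro s hs i
    exact hcP s ⟨hs.1, hceq.symm ▸ hs.2⟩ i
  -- limit ε → 0
  have hyE_eps : ∀ ε u : ℝ, yE ε u = yE 0 u
      + ε * (Real.exp (R u) * (1 + ∫ v in t₀..u, Real.exp (-(R v)))) := by
    intro ε u
    have hsplit : ∫ v in t₀..u, (A0 v + ε) * Real.exp (-(R v))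
        = (∫ v in t₀..u, (A0 v + 0) * Real.exp (-(R v)))
          + ε * ∫ v in t₀..u, Real.exp (-(R v)) := by
      rw [← intervalIntegral.integral_const_mul, ← intervalIntegral.integral_add
        ((hintc 0).intervalIntegrable _ _) (show IntervalIntegrable (fun v => ε * Real.exp (-(R v))) volume t₀ u from
          (continuous_const.mul hexpRc).intervalIntegrable _ _)]
      congr 1
      funext v
      ring
    simp only [hyE]
    rw [hsplit]
    ring
  have hlim0 : ∀ u : ℝ, t₀ ≤ u → ∀ z : ℝ, (∀ ε : ℝ, 0 < ε → z ≤ yE ε u) → z ≤ yE 0 u := by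
    intro u hu z hz
    by_contra hcon
    push_neg at hcon
    have hK : 0 ≤ ∫ v in t₀..u, Real.exp (-(R v)) :=
      intervalIntegral.integral_nonneg hu fun v _ => Real.exp_nonneg _
    have hC0 : 0 < Real.exp (R u) * (1 + ∫ v in t₀..u, Real.exp (-(R v))) :=
      mul_pos (Real.exp_pos _) (by linarith)
    have h1 := hz ((z - yE 0 u) / (2 * (Real.exp (R u) * (1 + ∫ v in t₀..u, Real.exp (-(R v))))))
      (div_pos (by linarith) (by linarith))
    rw [hyE_eps] at h1
    have h2 : ((z - yE 0 u) / (2 * (Real.exp (R u) * (1 + ∫ v in t₀..u, Real.exp (-(R v))))))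
        * (Real.exp (R u) * (1 + ∫ v in t₀..u, Real.exp (-(R v)))) = (z - yE 0 u) / 2 := by
      field_simp
    rw [h2] at h1
    linarith
  constructor
  · -- first conclusion
    intro t htt htlt
    have hsup_le : sSup {r : ℝ | ∃ i : Fin (n+1), ∃ s : ℝ, s ≤ t ∧ r = |x i s|} ≤ yE 0 t := by
      refine csSup_le ⟨|x 0 t|, 0, t, le_rfl, rfl⟩ ?_
      rintro r ⟨i, s, hs, rfl⟩
      rcases le_or_gt s t₀ with h | h
      · have h1 := hymono 0 le_rfl t₀ t le_rfl htt
        rw [hyt₀ 0] at h1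
        have := hφub i s h
        linarith
      · refine hlim0 t htt _ fun ε hε => ?_
        exact (main ε hε t htt htlt s ⟨h.le, hs⟩ i).trans (hymono ε hε.le s t h.le hs)
    refine le_trans hsup_le (le_of_eq ?_)
    -- yE 0 t equals the Grönwall expression
    have hval : ∀ v : ℝ, t₀ ≤ v → calA S aU v = A0 v := by
      intro v hv
      rw [hA0]
      simp only
      rw [max_eq_left (le_trans ht₀ hv)]
    have hBval : ∀ v : ℝ, t₀ ≤ v → calB S aU γ1 γ2 μ1 μ2 ξ Ξ ζ ς v = B0 v := by
      intro v hv
      rw [hB0]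
      simp only
      rw [max_eq_left (le_trans ht₀ hv)]
    have huIcc : Set.uIcc t₀ t = Set.Icc t₀ t := Set.uIcc_of_le htt
    have e1 : (∫ v in t₀..t, calA S aU v) = ∫ v in t₀..t, A0 v :=
      intervalIntegral.integral_congr (by rw [huIcc]; exact fun v hv => hval v hv.1)
    have e2 : (∫ v in t₀..t, calB S aU γ1 γ2 μ1 μ2 ξ Ξ ζ ς v *
          (φn + ∫ r in t₀..v, calA S aU r) *
          Real.exp (∫ r in v..t, calB S aU γ1 γ2 μ1 μ2 ξ Ξ ζ ς r))
        = Real.exp (R t) * ∫ v in t₀..t, (φn + ∫ r in t₀..v, A0 r)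
            * (B0 v * Real.exp (-(R v))) := by
      rw [← intervalIntegral.integral_const_mul]
      refine intervalIntegral.integral_congr ?_
      rw [huIcc]
      intro v hv
      have hα : (∫ r in t₀..v, calA S aU r) = ∫ r in t₀..v, A0 r :=
        intervalIntegral.integral_congr
          (by rw [Set.uIcc_of_le hv.1]; exact fun r hr => hval r hr.1)
      have hBt : (∫ r in v..t, calB S aU γ1 γ2 μ1 μ2 ξ Ξ ζ ς r) = R t - R v := by
        have hB1 : (∫ r in v..t, calB S aU γ1 γ2 μ1 μ2 ξ Ξ ζ ς r) = ∫ r in v..t, B0 r :=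
          intervalIntegral.integral_congr
            (by rw [Set.uIcc_of_le hv.2]; exact fun r hr => hBval r (le_trans hv.1 hr.1))
        have hB2 := intervalIntegral.integral_add_adjacent_intervals
          (μ := MeasureTheory.volume) (a := t₀) (b := v) (c := t)
          (hB0c.intervalIntegrable _ _) (hB0c.intervalIntegrable _ _)
        rw [hB1]
        simp only [hR]
        linarith
      simp only
      rw [hBval v hv.1, hα, hBt, show R t - R v = R t + -(R v) by ring, Real.exp_add]
      ring
    rw [e1, e2]
    have hibp := intervalIntegral.integral_mul_deriv_eq_deriv_mul (a := t₀) (b := t)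
      (u := fun v => φn + ∫ r in t₀..v, A0 r) (u' := A0)
      (v := fun v => -Real.exp (-(R v))) (v' := fun v => B0 v * Real.exp (-(R v)))
      (fun v _ => (ftc _ hA0c t₀ v).const_add φn)
      (fun v _ => by
        have hd := ((hRd v).neg.exp).neg
        convert hd using 1
        show B0 v * Real.exp (-R v) = -(Real.exp (-R v) * -B0 v)
        ring
        all_goals rfl)
      (hA0c.intervalIntegrable _ _) ((hB0c.mul hexpRc).intervalIntegrable _ _)
    rw [hibp]
    beta_reduce
    have hs1 : (∫ r in t₀..t₀, A0 r) = 0 := intervalIntegral.integral_same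
    have hmin : (∫ v in t₀..t, A0 v * -Real.exp (-(R v)))
        = -∫ v in t₀..t, (A0 v + 0) * Real.exp (-(R v)) := by
      rw [← intervalIntegral.integral_neg]
      congr 1
      funext v
      ring
    rw [hs1, hRt₀, hmin]
    have hee : Real.exp (R t) * Real.exp (-(R t)) = 1 := by rw [← Real.exp_add]; simp
    simp only [hyE, neg_zero, Real.exp_zero, add_zero]
    linear_combination (φn + ∫ r in t₀..t, A0 r) * hee
  · -- second conclusion
    intro htop
    have hbot : tstar ≠ ⊥ := fun hb => by rw [hb] at htstar; exact (not_lt_bot htstar)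
    lift tstar to ℝ using ⟨htop, hbot⟩ with T hT
    refine ⟨max M (yE 0 T), fun i t ht => ?_⟩
    rcases le_or_gt t t₀ with h | h
    · exact le_max_of_le_left (hM i t h)
    · have htT : t ≤ T := (EReal.coe_lt_coe_iff.1 ht).le
      have h1 : |x i t| ≤ yE 0 t :=
        hlim0 t h.le _ fun ε hε => main ε hε t h.le ht t ⟨h.le, le_rfl⟩ i
      exact le_max_of_le_right (h1.trans (hymono 0 le_rfl t T h.le htT))
end

section
/- Assume (H1), (H2), (H3), (H5), (H6), (H7). Then every solution of system (1) with bounded initial condition at some t₀ ≥ 0 is bounded on ℝ. -/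
open MeasureTheory Filter

open CGData

open MeasureTheory Filter intervalIntegral Set

lemma cg_sandwich {f : ℝ → ℝ} (hf : Continuous f) {aL aU : ℝ} (haL : 0 < aL)
    (hbd : ∀ u, aL ≤ f u ∧ f u ≤ aU) (v : ℝ) :
    (0 ≤ v → v / aU ≤ ∫ u in (0:ℝ)..v, (f u)⁻¹ ∧ (∫ u in (0:ℝ)..v, (f u)⁻¹) ≤ v / aL) ∧
    (v ≤ 0 → v / aL ≤ ∫ u in (0:ℝ)..v, (f u)⁻¹ ∧ (∫ u in (0:ℝ)..v, (f u)⁻¹) ≤ v / aU) := by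
  have haU : 0 < aU := lt_of_lt_of_le haL (le_trans (hbd 0).1 (hbd 0).2)
  have hfpos : ∀ u, 0 < f u := fun u => lt_of_lt_of_le haL (hbd u).1
  have hcont : Continuous fun u => (f u)⁻¹ := hf.inv₀ (fun u => (hfpos u).ne')
  have hint : ∀ a b : ℝ, IntervalIntegrable (fun u => (f u)⁻¹) volume a b :=
    hcont.intervalIntegrable
  have hlb : ∀ u : ℝ, aU⁻¹ ≤ (f u)⁻¹ := fun u => inv_anti₀ (hfpos u) (hbd u).2
  have hub : ∀ u : ℝ, (f u)⁻¹ ≤ aL⁻¹ := fun u => (inv_le_inv₀ (hfpos u) haL).mpr (hbd u).1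
  constructor
  · intro hv
    constructor
    · have := intervalIntegral.integral_mono_on hv
        (_root_.intervalIntegrable_const (c := aU⁻¹)) (hint 0 v) (fun u _ => hlb u)
      simpa [div_eq_mul_inv, mul_comm] using this
    · have := intervalIntegral.integral_mono_on hv (hint 0 v)
        (_root_.intervalIntegrable_const (c := aL⁻¹)) (fun u _ => hub u)
      simpa [div_eq_mul_inv, mul_comm] using this
  · intro hv
    rw [intervalIntegral.integral_symm v 0]
    constructor
    · have := intervalIntegral.integral_mono_on hv (hint v 0)
        (_root_.intervalIntegrable_const (c := aL⁻¹)) (fun u _ => hub u)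
      simp only [intervalIntegral.integral_const, smul_eq_mul] at this
      rw [div_eq_mul_inv]; linarith
    · have := intervalIntegral.integral_mono_on hv
        (_root_.intervalIntegrable_const (c := aU⁻¹)) (hint v 0) (fun u _ => hlb u)
      simp only [intervalIntegral.integral_const, smul_eq_mul] at this
      rw [div_eq_mul_inv]; linarith

lemma cg_deriv_compare {f g : ℝ → ℝ} {t₁ t₂ : ℝ} (ht : t₁ ≤ t₂) (hg : Continuous g)
    (hf : ∀ s ∈ Icc t₁ t₂, ∃ d, HasDerivAt f d s ∧ g s ≤ d) :
    (∫ s in t₁..t₂, g s) ≤ f t₂ - f t₁ := by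
  set ψ : ℝ → ℝ := fun s => f s - ∫ r in t₁..s, g r with hψ
  have hψd : ∀ s ∈ Icc t₁ t₂, ∃ d, HasDerivAt ψ d s ∧ 0 ≤ d := by
    intro s hs
    obtain ⟨d, hd, hgd⟩ := hf s hs
    have hG : HasDerivAt (fun r => ∫ u in t₁..r, g u) (g s) s :=
      intervalIntegral.integral_hasDerivAt_right (hg.intervalIntegrable _ _)
        (hg.stronglyMeasurable.stronglyMeasurableAtFilter) hg.continuousAt
    exact ⟨d - g s, hd.sub hG, by linarith⟩
  have hmono : MonotoneOn ψ (Icc t₁ t₂) := by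
    apply monotoneOn_of_deriv_nonneg (convex_Icc _ _)
    · intro s hs
      obtain ⟨d, hd, _⟩ := hψd s hs
      exact hd.continuousAt.continuousWithinAt
    · intro s hs
      obtain ⟨d, hd, _⟩ := hψd s (interior_subset hs)
      exact hd.differentiableAt.differentiableWithinAt
    · intro s hs
      obtain ⟨d, hd, hd0⟩ := hψd s (interior_subset hs)
      rw [hd.deriv]; exact hd0
  have := hmono (left_mem_Icc.2 ht) (right_mem_Icc.2 ht) ht
  simp only [hψ, intervalIntegral.integral_same, sub_zero] at this
  linarith

lemma cg_const_bound {f : ℝ → ℝ} (hf : Continuous f) {c v : ℝ} (hc : ∀ u, f u ≤ c) :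
    (0 ≤ v → (∫ u in (0:ℝ)..v, f u) ≤ c * v) ∧
    (v ≤ 0 → c * v ≤ ∫ u in (0:ℝ)..v, f u) := by
  constructor
  · intro hv
    have := intervalIntegral.integral_mono_on (μ := volume) hv (hf.intervalIntegrable 0 v)
      (_root_.intervalIntegrable_const (c := c)) (fun u _ => hc u)
    simpa [mul_comm] using this
  · intro hv
    rw [intervalIntegral.integral_symm v 0]
    have := intervalIntegral.integral_mono_on (μ := volume) hv (hf.intervalIntegrable v 0)
      (_root_.intervalIntegrable_const (c := c)) (fun u _ => hc u)
    simp only [intervalIntegral.integral_const, smul_eq_mul] at this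
    linarith

lemma cg_local_decrease {f : ℝ → ℝ} {f' x : ℝ} (hf : HasDerivAt f f' x) (hneg : f' < 0) :
    ∃ δ > 0, ∀ t ∈ Ioo x (x + δ), f t < f x := by
  have hslope := hasDerivAt_iff_tendsto_slope.1 hf
  have hev : ∀ᶠ t in nhdsWithin x {x}ᶜ, slope f x t < 0 :=
    hslope.eventually_lt_const hneg
  have hev2 : ∀ᶠ t in nhdsWithin x (Ioi x), slope f x t < 0 :=
    nhdsWithin_mono x (fun t ht => ne_of_gt ht) hev
  rw [eventually_iff, mem_nhdsGT_iff_exists_Ioo_subset] at hev2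
  obtain ⟨u, hu, hsub⟩ := hev2
  refine ⟨u - x, by simpa [sub_pos] using hu, fun t ht => ?_⟩
  have ht' : t ∈ Ioo x u := ⟨ht.1, by linarith [ht.2]⟩
  have h2 := hsub ht'
  simp only [Set.mem_setOf_eq, slope_def_field] at h2
  have hxt : 0 < t - x := by linarith [ht.1]
  have h3 : f t - f x < 0 := by
    by_contra hcon
    push_neg at hcon
    exact absurd h2 (not_lt.2 (div_nonneg hcon hxt.le))
  linarith

lemma cg_limsup_neg {u : ℝ → ℝ} (h : Filter.limsup u Filter.atTop < 0) :
    ∃ ε > 0, ∀ᶠ t in Filter.atTop, u t ≤ -ε := by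
  rw [Filter.limsup_eq] at h
  set S : Set ℝ := {a | ∀ᶠ t in Filter.atTop, u t ≤ a} with hS
  have hne : S.Nonempty := by
    by_contra hc
    rw [Set.not_nonempty_iff_eq_empty] at hc
    rw [hc, Real.sInf_empty] at h
    exact lt_irrefl 0 h
  obtain ⟨c, hcS, hc0⟩ := exists_lt_of_csInf_lt hne h
  have : ∀ᶠ t in Filter.atTop, u t ≤ c := hcS
  exact ⟨-c, by linarith, by simpa using this⟩

lemma cg_abs_sum3 {α β γ : Type*} [Fintype α] [Fintype β] [Fintype γ]
    (f g : α → β → γ → ℝ) (h : ∀ p j l, |f p j l| ≤ g p j l) :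
    |∑ p, ∑ j, ∑ l, f p j l| ≤ ∑ p, ∑ j, ∑ l, g p j l :=
  (Finset.abs_sum_le_sum_abs _ _).trans (Finset.sum_le_sum fun p _ =>
    (Finset.abs_sum_le_sum_abs _ _).trans (Finset.sum_le_sum fun j _ =>
      (Finset.abs_sum_le_sum_abs _ _).trans (Finset.sum_le_sum fun l _ => h p j l)))
set_option maxHeartbeats 2000000 in
/-- Lemma 3.2: under (H1), (H2), (H3), (H5), (H6), (H7), every solution of system (1)
with bounded initial condition is bounded on `ℝ`. -/
theorem bounded_solutions {n P : ℕ} (S : CGData n P)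
    (aL aU : Fin (n+1) → ℝ) (A : Fin (n+1) → ℝ → ℝ) (β : Fin (n+1) → ℝ → ℝ)
    (γ1 γ2 μ1 μ2 : Fin (n+1) → Fin (n+1) → Fin (n+1) → Fin (P+1) → ℝ)
    (ξ Ξ : Fin (n+1) → Fin (n+1) → Fin (P+1) → ℝ) (ζ ς : Fin (n+1) → ℝ)
    (dv : Fin (n+1) → ℝ)
    (hreg : S.Regular)
    (h1 : S.H1) (h2 : S.H2 aL aU A) (h3 : S.H3 β)
    (h5 : S.H5 γ1 γ2 μ1 μ2) (h6 : S.H6 ξ Ξ ζ ς)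
    (h7 : S.H7 aL aU A β γ1 γ2 μ1 μ2 ξ Ξ ζ ς dv)
    (t₀ : ℝ) (ht₀ : 0 ≤ t₀)
    (x : Fin (n+1) → ℝ → ℝ) (hx : S.IsSolution t₀ x) :
    ∃ M, ∀ i, ∀ t : ℝ, |x i t| ≤ M := by
  classical
  obtain ⟨ha_cont, ha_pos, hb_cont, hc_cont, hd_cont, hI_cont, hτ_cont, hσ_cont, hτ_nn, hσ_nn,
    hF_cont, hh_cont, hf_cont2, hg_cont, hG_cont, hη, hρ⟩ := hreg
  obtain ⟨hc_bd, hd_bd, hI_bd, hb0_bd⟩ := h1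
  obtain ⟨haL_pos, haLU, ha_bds, hA⟩ := h2
  obtain ⟨hβ_cont, hβ_nn, hβ⟩ := h3
  obtain ⟨h5pos, hh_lip, hf_lip⟩ := h5
  obtain ⟨hξ_pos, hΞ_pos, hζς_pos, hg_lip, hG_lip, hF_lip⟩ := h6
  obtain ⟨hdv_pos, h7lim⟩ := h7
  obtain ⟨hx_cont, ⟨M₀, hM₀⟩, hx_ode⟩ := hx
  have haU_pos : ∀ i, 0 < aU i := fun i => (haL_pos i).trans_le (haLU i)
  -- the truncated coefficient `aT`
  set aT : Fin (n+1) → ℝ → ℝ → ℝ := fun i t u => S.a i (max t 0) u with haTdef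
  have hmax : Continuous fun t : ℝ => max t 0 := continuous_id.max continuous_const
  have haT_cont : ∀ i, Continuous (fun q : ℝ × ℝ => aT i q.1 q.2) := fun i =>
    (ha_cont i).comp_continuous ((hmax.comp continuous_fst).prodMk continuous_snd)
      (fun q => ⟨le_max_right q.1 0, trivial⟩)
  have haT_contu : ∀ i t, Continuous fun u => aT i t u := fun i t =>
    (haT_cont i).comp (continuous_const.prodMk continuous_id)
  have haT_bd : ∀ i t u, aL i ≤ aT i t u ∧ aT i t u ≤ aU i := fun i t u =>
    ha_bds i _ (le_max_right _ _) u
  have haT_pos : ∀ i t u, 0 < aT i t u := fun i t u => (haL_pos i).trans_le (haT_bd i t u).1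
  have haTeq : ∀ i (t : ℝ), 0 ≤ t → ∀ u, aT i t u = S.a i t u := by
    intro i t ht u; simp [haTdef, max_eq_left ht]
  have hinv_cont : ∀ i t, Continuous (fun u => (aT i t u)⁻¹) := fun i t =>
    (haT_contu i t).inv₀ (fun u => (haT_pos i t u).ne')
  -- the transformation `H` and transformed solution `y`
  set H : Fin (n+1) → ℝ → ℝ → ℝ := fun i t v => ∫ u in (0:ℝ)..v, (aT i t u)⁻¹ with hHdef
  set y : Fin (n+1) → ℝ → ℝ := fun i t => H i t (x i t) with hydef
  have hy_cont : ∀ i, Continuous (y i) := by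
    intro i
    have hjoint : Continuous (Function.uncurry (fun t u => (aT i t u)⁻¹)) :=
      (haT_cont i).inv₀ (fun q => (haT_pos i q.1 q.2).ne')
    exact continuous_parametric_intervalIntegral_of_continuous hjoint (hx_cont i)
  have hsand := fun i t v => cg_sandwich (haT_contu i t) (haL_pos i) (fun u => haT_bd i t u) v
  have habs_y : ∀ i t, |y i t| ≤ |x i t| / aL i := by
    intro i t
    rcases le_total 0 (x i t) with hv | hv
    · obtain ⟨h1, h2⟩ := (hsand i t (x i t)).1 hv
      have h0 : 0 ≤ y i t := le_trans (div_nonneg hv (haU_pos i).le) h1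
      rw [abs_of_nonneg h0, abs_of_nonneg hv]; exact h2
    · obtain ⟨h1, h2⟩ := (hsand i t (x i t)).2 hv
      have h0 : y i t ≤ 0 := le_trans h2 (div_nonpos_of_nonpos_of_nonneg hv (haU_pos i).le)
      rw [abs_of_nonpos h0, abs_of_nonpos hv, neg_div]
      linarith
  have habs_x : ∀ i t, |x i t| ≤ aU i * |y i t| := by
    intro i t
    rcases le_total 0 (x i t) with hv | hv
    · obtain ⟨h1, h2⟩ := (hsand i t (x i t)).1 hv
      have h0 : 0 ≤ y i t := le_trans (div_nonneg hv (haU_pos i).le) h1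
      rw [abs_of_nonneg h0, abs_of_nonneg hv]
      rw [div_le_iff₀ (haU_pos i)] at h1; linarith
    · obtain ⟨h1, h2⟩ := (hsand i t (x i t)).2 hv
      have h0 : y i t ≤ 0 := le_trans h2 (div_nonpos_of_nonpos_of_nonneg hv (haU_pos i).le)
      rw [abs_of_nonpos h0, abs_of_nonpos hv]
      have h3 := (le_div_iff₀ (haU_pos i)).1 h2
      nlinarith [haU_pos i]
  have hxy_pos : ∀ i t, 0 < y i t → aL i * y i t ≤ x i t := by
    intro i t hy
    rcases le_total 0 (x i t) with hv | hv
    · obtain ⟨h1, h2⟩ := (hsand i t (x i t)).1 hv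
      rw [le_div_iff₀ (haL_pos i)] at h2; linarith
    · obtain ⟨h1, h2⟩ := (hsand i t (x i t)).2 hv
      have : y i t ≤ 0 := le_trans h2 (div_nonpos_of_nonpos_of_nonneg hv (haU_pos i).le)
      linarith
  have hxy_neg : ∀ i t, y i t < 0 → x i t ≤ aL i * y i t := by
    intro i t hy
    rcases le_total 0 (x i t) with hv | hv
    · obtain ⟨h1, h2⟩ := (hsand i t (x i t)).1 hv
      have : 0 ≤ y i t := le_trans (div_nonneg hv (haU_pos i).le) h1
      linarith
    · obtain ⟨h1, h2⟩ := (hsand i t (x i t)).2 hv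
      rw [div_le_iff₀ (haL_pos i)] at h1; linarith
  -- constants from (H1)
  choose Cc hCc using hc_bd
  choose Cd hCd using hd_bd
  choose CI hCI using hI_bd
  choose Cb0 hCb0 using fun i => hb0_bd i 0
  have hCc_nn : ∀ i j l p, 0 ≤ Cc i j l p := fun i j l p =>
    (abs_nonneg _).trans (hCc i j l p 0 le_rfl)
  have hCd_nn : ∀ i j l p, 0 ≤ Cd i j l p := fun i j l p =>
    (abs_nonneg _).trans (hCd i j l p 0 le_rfl)
  have hCI_nn : ∀ i, 0 ≤ CI i := fun i => (abs_nonneg _).trans (hCI i 0 le_rfl)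
  have hCb0_nn : ∀ i, 0 ≤ Cb0 i := fun i => (abs_nonneg _).trans (hCb0 i 0 le_rfl)
  -- the coupling strength function
  set Sg : Fin (n+1) → ℝ → ℝ := fun i t => ∑ p : Fin (P+1), ∑ j : Fin (n+1), ∑ l : Fin (n+1),
    (ζ i * |S.c i j l p t| * (aU j * dv j * γ1 i j l p + aU l * dv l * γ2 i j l p)
      + ς i * |S.d i j l p t| *
        (aU j * dv j * ξ i j p * μ1 i j l p + aU l * dv l * Ξ i l p * μ2 i j l p)) with hSgdef
  have hSg_nn : ∀ i t, 0 ≤ Sg i t := by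
    intro i t
    refine Finset.sum_nonneg fun p _ => Finset.sum_nonneg fun j _ =>
      Finset.sum_nonneg fun l _ => add_nonneg ?_ ?_
    · refine mul_nonneg (mul_nonneg (hζς_pos i).1.le (abs_nonneg _)) (add_nonneg ?_ ?_)
      · exact mul_nonneg (mul_nonneg (haU_pos j).le (hdv_pos j).le) (h5pos i j l p).1.le
      · exact mul_nonneg (mul_nonneg (haU_pos l).le (hdv_pos l).le) (h5pos i j l p).2.1.le
    · refine mul_nonneg (mul_nonneg (hζς_pos i).2.le (abs_nonneg _)) (add_nonneg ?_ ?_)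
      · exact mul_nonneg (mul_nonneg (mul_nonneg (haU_pos j).le (hdv_pos j).le)
          (hξ_pos i j p).le) (h5pos i j l p).2.2.1.le
      · exact mul_nonneg (mul_nonneg (mul_nonneg (haU_pos l).le (hdv_pos l).le)
          (hΞ_pos i l p).le) (h5pos i j l p).2.2.2.le
  have hSg_id : ∀ i t, dv i * (∑ p : Fin (P+1), ∑ j : Fin (n+1), ∑ l : Fin (n+1),
      (ζ i * |S.c i j l p t| *
          (aU j * (dv j / dv i) * γ1 i j l p + aU l * (dv l / dv i) * γ2 i j l p)
        + ς i * |S.d i j l p t| *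
          (aU j * (dv j / dv i) * ξ i j p * μ1 i j l p
            + aU l * (dv l / dv i) * Ξ i l p * μ2 i j l p))) = Sg i t := by
    intro i t
    rw [hSgdef, Finset.mul_sum]
    refine Finset.sum_congr rfl fun p _ => ?_
    rw [Finset.mul_sum]
    refine Finset.sum_congr rfl fun j _ => ?_
    rw [Finset.mul_sum]
    refine Finset.sum_congr rfl fun l _ => ?_
    have := (hdv_pos i).ne'
    field_simp
    try ring
  -- extract uniform eventual negativity from (H7)
  choose ε₀ hε₀pos hε₀ev using fun i => cg_limsup_neg (h7lim i)
  set ε : ℝ := Finset.univ.inf' Finset.univ_nonempty ε₀ with hεdef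
  have hε_pos : 0 < ε := by
    rw [hεdef, Finset.lt_inf'_iff]
    exact fun i _ => hε₀pos i
  have hε_le : ∀ i, ε ≤ ε₀ i := fun i => Finset.inf'_le _ (Finset.mem_univ i)
  obtain ⟨T₀, hT₀⟩ := Filter.eventually_atTop.1 (Filter.eventually_all.2 hε₀ev)
  set T : ℝ := max T₀ (t₀ + 1) with hTdef
  have hTt₀ : t₀ + 1 ≤ T := le_max_right _ _
  have hT_pos : 0 < T := by linarith
  -- the continuous lower bound for A on [T,∞)
  set Ah : Fin (n+1) → ℝ → ℝ := fun i t => (Sg i (max t 0) / dv i + ε) / aL i - β i (max t 0)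
    with hAhdef
  have hSg_cont : ∀ i, Continuous fun t => Sg i (max t 0) := by
    intro i
    rw [hSgdef]
    refine continuous_finset_sum _ fun p _ => continuous_finset_sum _ fun j _ =>
      continuous_finset_sum _ fun l _ => Continuous.add ?_ ?_
    · exact (continuous_const.mul
        (((hc_cont i j l p).comp_continuous hmax fun t => le_max_right t 0).abs)).mul
          continuous_const
    · exact (continuous_const.mul
        (((hd_cont i j l p).comp_continuous hmax fun t => le_max_right t 0).abs)).mul
          continuous_const
  have hAh_cont : ∀ i, Continuous (Ah i) := by
    intro i
    rw [hAhdef]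
    exact (((hSg_cont i).div_const _).add continuous_const).div_const _ |>.sub
      ((hβ_cont i).comp_continuous hmax fun t => le_max_right t 0)
  have hAh_le : ∀ i t, T ≤ t → Ah i t ≤ A i t := by
    intro i t ht
    have ht0 : (0:ℝ) ≤ t := le_trans hT_pos.le ht
    have h7e := (hT₀ t (le_trans (le_max_left _ _) ht)) i
    simp only [CGData.H7expr] at h7e
    have hse : Sg i t / dv i = ∑ p : Fin (P+1), ∑ j : Fin (n+1), ∑ l : Fin (n+1),
        (ζ i * |S.c i j l p t| *
            (aU j * (dv j / dv i) * γ1 i j l p + aU l * (dv l / dv i) * γ2 i j l p)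
          + ς i * |S.d i j l p t| *
            (aU j * (dv j / dv i) * ξ i j p * μ1 i j l p
              + aU l * (dv l / dv i) * Ξ i l p * μ2 i j l p)) := by
      rw [div_eq_iff (hdv_pos i).ne', ← hSg_id i t]
      ring
    have hεi : ε ≤ ε₀ i := hε_le i
    have h2 : Sg i t / dv i + ε ≤ aL i * (β i t + A i t) := by
      rw [hse]; linarith
    rw [hAhdef]
    simp only [max_eq_left ht0]
    rw [sub_le_iff_le_add, div_le_iff₀ (haL_pos i)]
    linarith
  have hβAh : ∀ i t, 0 ≤ t → (β i t + Ah i t) * aL i = Sg i t / dv i + ε := by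
    intro i t ht
    simp only [hAhdef, max_eq_left ht]
    have he : β i t + ((Sg i t / dv i + ε) / aL i - β i t) = (Sg i t / dv i + ε) / aL i := by
      ring
    rw [he, div_mul_cancel₀ _ (haL_pos i).ne']
  have hβAh_nn : ∀ i t, 0 ≤ t → 0 ≤ β i t + Ah i t := by
    intro i t ht
    have h1 := hβAh i t ht
    have h2 : 0 ≤ Sg i t / dv i + ε :=
      add_nonneg (div_nonneg (hSg_nn i t) (hdv_pos i).le) hε_pos.le
    by_contra hcon
    push_neg at hcon
    have h3 : 0 < -(β i t + Ah i t) * aL i := mul_pos (neg_pos.2 hcon) (haL_pos i)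
    have h4 : -(β i t + Ah i t) * aL i = -((β i t + Ah i t) * aL i) := by ring
    rw [h4, h1] at h3
    linarith
  -- monotonicity estimate for `t ↦ (aT i t u)⁻¹`
  have hkey1 : ∀ i u (t1 t2 : ℝ), T ≤ t1 → t1 ≤ t2 →
      (aT i t2 u)⁻¹ - (aT i t1 u)⁻¹ ≤ -(∫ s in t1..t2, Ah i s) := by
    intro i u t1 t2 hT1 h12
    have hcomp := cg_deriv_compare (f := fun s => -(aT i s u)⁻¹) (g := Ah i) h12 (hAh_cont i) ?_
    · linarith
    intro s hs
    have hsT : T ≤ s := le_trans hT1 hs.1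
    have hs0 : (0:ℝ) ≤ s := le_trans hT_pos.le hsT
    obtain ⟨da, hda, hAda⟩ := hA i u s hs0
    have hane : S.a i s u ≠ 0 := (ha_pos i s hs0 u).ne'
    have hinv : HasDerivAt (fun r => -(S.a i r u)⁻¹) (-(-da / (S.a i s u) ^ 2)) s :=
      (hda.inv hane).neg
    have heq : (fun r => -(aT i r u)⁻¹) =ᶠ[nhds s] (fun r => -(S.a i r u)⁻¹) := by
      have hmem : Set.Ioi (0:ℝ) ∈ nhds s := isOpen_Ioi.mem_nhds (lt_of_lt_of_le hT_pos hsT)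
      filter_upwards [hmem] with r hr
      rw [haTeq i r (le_of_lt hr)]
    refine ⟨-(-da / (S.a i s u) ^ 2), hinv.congr_of_eventuallyEq heq, ?_⟩
    have hsq : 0 < (S.a i s u) ^ 2 := by positivity
    have h3 : A i s ≤ da / (S.a i s u) ^ 2 := (le_div_iff₀ hsq).2 hAda
    have h4 : Ah i s ≤ A i s := hAh_le i s hsT
    have h5 : -(-da / (S.a i s u) ^ 2) = da / (S.a i s u) ^ 2 := by ring
    rw [h5]
    exact le_trans h4 h3
  have hkey1' : ∀ i u (t1 t2 : ℝ), T ≤ t1 → t1 ≤ t2 →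
      (aT i t2 u)⁻¹ - (aT i t1 u)⁻¹ ≤ -(∫ s in t1..t2, Ah i s) := hkey1
  -- variation of `H` in its time argument
  have hterm1 : ∀ i (t1 t2 v : ℝ), T ≤ t1 → t1 ≤ t2 →
      (0 ≤ v → H i t2 v - H i t1 v ≤ -(∫ s in t1..t2, Ah i s) * v) ∧
      (v ≤ 0 → -(∫ s in t1..t2, Ah i s) * v ≤ H i t2 v - H i t1 v) := by
    intro i t1 t2 v hT1 h12
    have hsub : H i t2 v - H i t1 v
        = ∫ u in (0:ℝ)..v, ((aT i t2 u)⁻¹ - (aT i t1 u)⁻¹) := by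
      rw [hHdef]
      rw [intervalIntegral.integral_sub ((hinv_cont i t2).intervalIntegrable 0 v)
        ((hinv_cont i t1).intervalIntegrable 0 v)]
    have hc := cg_const_bound (c := -(∫ s in t1..t2, Ah i s)) (v := v)
      ((hinv_cont i t2).sub (hinv_cont i t1)) (fun u => hkey1 i u t1 t2 hT1 h12)
    constructor
    · intro hv
      rw [hsub]
      exact le_trans (hc.1 hv) (by ring_nf; exact le_refl _)
    · intro hv
      rw [hsub]
      exact le_trans (by ring_nf; exact le_refl _) (hc.2 hv)
  -- global bound for `x` on `(-∞, T]`
  choose Bc hBc using fun i =>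
    (isCompact_Icc (a := t₀) (b := T)).exists_bound_of_continuousOn (hx_cont i).continuousOn
  set Bx : ℝ := M₀ + ∑ i, |Bc i| with hBxdef
  have hM₀_nn : 0 ≤ M₀ := le_trans (abs_nonneg _) (hM₀ 0 t₀ le_rfl)
  have hBx_nn : 0 ≤ Bx := add_nonneg hM₀_nn (Finset.sum_nonneg fun i _ => abs_nonneg _)
  have hBx : ∀ i t, t ≤ T → |x i t| ≤ Bx := by
    intro i t ht
    rcases le_total t t₀ with h | h
    · exact le_trans (hM₀ i t h) (le_add_of_nonneg_right
        (Finset.sum_nonneg fun _ _ => abs_nonneg _))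
    · have h1 : |x i t| ≤ Bc i := by
        have := hBc i t ⟨h, ht⟩
        simpa using this
      have h2 : Bc i ≤ |Bc i| := le_abs_self _
      have h3 : |Bc i| ≤ ∑ j, |Bc j| :=
        Finset.single_le_sum (fun j _ => abs_nonneg (Bc j)) (Finset.mem_univ i)
      rw [hBxdef]; linarith
  -- the constant K
  set K : Fin (n+1) → ℝ := fun i => Cb0 i + CI i + |S.F i 0 0|
    + (∑ p : Fin (P+1), ∑ j : Fin (n+1), ∑ l : Fin (n+1),
        ζ i * Cc i j l p * |S.h i j l p 0 0|)
    + (∑ p : Fin (P+1), ∑ j : Fin (n+1), ∑ l : Fin (n+1),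
        ς i * Cd i j l p * (|S.f i j l p 0 0| + μ1 i j l p * |S.g i j p 0|
          + μ2 i j l p * |S.G i l p 0|)) with hKdef
  have hK_nn : ∀ i, 0 ≤ K i := by
    intro i
    simp only [hKdef]
    have h1 : (0:ℝ) ≤ ∑ p : Fin (P+1), ∑ j : Fin (n+1), ∑ l : Fin (n+1),
        ζ i * Cc i j l p * |S.h i j l p 0 0| :=
      Finset.sum_nonneg fun p _ => Finset.sum_nonneg fun j _ => Finset.sum_nonneg fun l _ =>
        mul_nonneg (mul_nonneg (hζς_pos i).1.le (hCc_nn i j l p)) (abs_nonneg _)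
    have h2 : (0:ℝ) ≤ ∑ p : Fin (P+1), ∑ j : Fin (n+1), ∑ l : Fin (n+1),
        ς i * Cd i j l p * (|S.f i j l p 0 0| + μ1 i j l p * |S.g i j p 0|
          + μ2 i j l p * |S.G i l p 0|) :=
      Finset.sum_nonneg fun p _ => Finset.sum_nonneg fun j _ => Finset.sum_nonneg fun l _ =>
        mul_nonneg (mul_nonneg (hζς_pos i).2.le (hCd_nn i j l p))
          (add_nonneg (add_nonneg (abs_nonneg _)
            (mul_nonneg (h5pos i j l p).2.2.1.le (abs_nonneg _)))
            (mul_nonneg (h5pos i j l p).2.2.2.le (abs_nonneg _)))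
    have := hCb0_nn i
    have := hCI_nn i
    have := abs_nonneg (S.F i 0 0)
    linarith
  -- the barrier level M
  set M : ℝ := 1 + ∑ i, (Bx / (aL i * dv i) + K i / (ε * dv i)) with hMdef
  have hsum_nn : (0:ℝ) ≤ ∑ i, (Bx / (aL i * dv i) + K i / (ε * dv i)) :=
    Finset.sum_nonneg fun i _ => add_nonneg
      (div_nonneg hBx_nn (mul_nonneg (haL_pos i).le (hdv_pos i).le))
      (div_nonneg (hK_nn i) (mul_nonneg hε_pos.le (hdv_pos i).le))
  have hM_pos : 0 < M := by rw [hMdef]; linarith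
  have hMBx : ∀ i, Bx ≤ aL i * dv i * M := by
    intro i
    have h1 : Bx / (aL i * dv i) ≤ M := by
      rw [hMdef]
      have : Bx / (aL i * dv i) + K i / (ε * dv i)
          ≤ ∑ j, (Bx / (aL j * dv j) + K j / (ε * dv j)) :=
        Finset.single_le_sum (fun j _ => add_nonneg
          (div_nonneg hBx_nn (mul_nonneg (haL_pos j).le (hdv_pos j).le))
          (div_nonneg (hK_nn j) (mul_nonneg hε_pos.le (hdv_pos j).le))) (Finset.mem_univ i)
      have h0 : 0 ≤ K i / (ε * dv i) :=
        div_nonneg (hK_nn i) (mul_nonneg hε_pos.le (hdv_pos i).le)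
      linarith
    rw [div_le_iff₀ (mul_pos (haL_pos i) (hdv_pos i))] at h1
    linarith
  have hMK : ∀ i, K i < ε * dv i * M := by
    intro i
    have h1 : K i / (ε * dv i) ≤ M - 1 := by
      rw [hMdef]
      have : Bx / (aL i * dv i) + K i / (ε * dv i)
          ≤ ∑ j, (Bx / (aL j * dv j) + K j / (ε * dv j)) :=
        Finset.single_le_sum (fun j _ => add_nonneg
          (div_nonneg hBx_nn (mul_nonneg (haL_pos j).le (hdv_pos j).le))
          (div_nonneg (hK_nn j) (mul_nonneg hε_pos.le (hdv_pos j).le))) (Finset.mem_univ i)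
      have h0 : 0 ≤ Bx / (aL i * dv i) :=
        div_nonneg hBx_nn (mul_nonneg (haL_pos i).le (hdv_pos i).le)
      linarith
    have h2 : 0 < ε * dv i := mul_pos hε_pos (hdv_pos i)
    rw [div_le_iff₀ h2] at h1
    nlinarith
  -- initial-segment control of y
  have hy_init : ∀ i t, t ≤ T → |y i t| ≤ dv i * M := by
    intro i t ht
    have h1 : |y i t| ≤ |x i t| / aL i := habs_y i t
    have h2 : |x i t| ≤ Bx := hBx i t ht
    have h3 : Bx / aL i ≤ dv i * M := by
      rw [div_le_iff₀ (haL_pos i)]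
      have := hMBx i
      linarith [hMBx i]
    calc |y i t| ≤ |x i t| / aL i := h1
      _ ≤ Bx / aL i := (div_le_div_iff_of_pos_right (haL_pos i)).2 h2
      _ ≤ dv i * M := h3
  -- measure facts
  have hprob : ∀ (m : Measure ℝ), IsProbabilityMeasure m → m (Set.Ioi 0) = 0 →
      m (Set.Iic 0) = 1 := by
    intro m hm h0
    haveI := hm
    have h2 : m Set.univ ≤ m (Set.Iic 0) + m (Set.Ioi 0) := by
      rw [← Set.Iic_union_Ioi (a := (0:ℝ))]
      exact measure_union_le _ _
    rw [h0, add_zero] at h2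
    have h3 : m (Set.Iic 0) ≤ m Set.univ := measure_mono (Set.subset_univ _)
    have h4 : m (Set.Iic 0) = m Set.univ := le_antisymm h3 h2
    rw [h4, measure_univ]
  have hint_bd : ∀ (φ : ℝ → ℝ) (m : Measure ℝ), Continuous φ → m (Set.Iic 0) = 1 →
      ∀ C : ℝ, (∀ s ∈ Set.Iic (0:ℝ), |φ s| ≤ C) → |∫ s in Set.Iic (0:ℝ), φ s ∂m| ≤ C := by
    intro φ m hφ hm C hC
    have h1 : ‖∫ s in Set.Iic (0:ℝ), φ s ∂m‖ ≤ C * (m (Set.Iic 0)).toReal := by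
      apply MeasureTheory.norm_setIntegral_le_of_norm_le_const
      · rw [hm]; exact ENNReal.one_lt_top
      · intro s hs
        rw [Real.norm_eq_abs]
        exact hC s hs
    rw [hm] at h1
    simpa using h1
  -- main claim: y stays below the barrier for t ≥ T
  have main : ∀ t, T ≤ t → ∀ i, |y i t| ≤ dv i * M := by
    by_contra hcon
    push_neg at hcon
    obtain ⟨tb, htbT, ib, hib⟩ := hcon
    set B : Set ℝ := {t | T ≤ t ∧ ∃ i, dv i * M < |y i t|} with hBdef
    have hBne : B.Nonempty := ⟨tb, htbT, ib, hib⟩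
    have hBbd : BddBelow B := ⟨T, fun t ht => ht.1⟩
    set t1 : ℝ := sInf B with ht1def
    have ht1T : T ≤ t1 := le_csInf hBne (fun t ht => ht.1)
    have ht1_0 : (0:ℝ) ≤ t1 := le_trans hT_pos.le ht1T
    have ht₀t1 : t₀ < t1 := by linarith
    have hgood_lt : ∀ s, s < t1 → ∀ i, |y i s| ≤ dv i * M := by
      intro s hs i
      rcases le_or_gt s T with hsT | hsT
      · exact hy_init i s hsT
      · by_contra hbad
        push_neg at hbad
        have hmem : s ∈ B := ⟨hsT.le, i, hbad⟩
        exact absurd (csInf_le hBbd hmem) (not_le.2 hs)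
    have ht1good : ∀ i, |y i t1| ≤ dv i * M := by
      intro i
      by_contra hbad
      push_neg at hbad
      have hev : ∀ᶠ t in nhds t1, dv i * M < |y i t| :=
        Filter.Tendsto.eventually_const_lt hbad ((hy_cont i).abs.continuousAt)
      rw [Metric.eventually_nhds_iff] at hev
      obtain ⟨δ, hδ, hball⟩ := hev
      rcases lt_or_ge T t1 with hTlt | hTle
      · set s : ℝ := max T (t1 - δ/2) with hsdef
        have hs1 : s < t1 := by
          rw [hsdef, max_lt_iff]
          constructor
          · exact hTlt
          · linarith
        have hs2 : dist s t1 < δ := by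
          rw [Real.dist_eq, abs_of_nonpos (by linarith : s - t1 ≤ 0)]
          have : t1 - δ/2 ≤ s := le_max_right _ _
          simp only [neg_sub]
          linarith
        have hmem : s ∈ B := ⟨le_max_left _ _, i, hball hs2⟩
        exact absurd (csInf_le hBbd hmem) (not_le.2 hs1)
      · have : t1 = T := le_antisymm hTle ht1T
        exact absurd (hy_init i t1 this.le) (not_le.2 hbad)
    have hpastY : ∀ j s, s ≤ t1 → |y j s| ≤ dv j * M := by
      intro j s hs
      rcases lt_or_eq_of_le hs with h | h
      · exact hgood_lt s h j
      · rw [h]; exact ht1good j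
    have hpastX : ∀ j s, s ≤ t1 → |x j s| ≤ aU j * (dv j * M) := by
      intro j s hs
      exact le_trans (habs_x j s)
        (mul_le_mul_of_nonneg_left (hpastY j s hs) (haU_pos j).le)
    have hdvM_pos : ∀ i, 0 < dv i * M := fun i => mul_pos (hdv_pos i) hM_pos
    -- local goodness just to the right of t1
    have hlocal : ∀ i, ∃ δ > 0, ∀ t ∈ Set.Ioo t1 (t1+δ), |y i t| ≤ dv i * M := by
      intro i
      rcases lt_or_eq_of_le (ht1good i) with hlt | heq
      · have hev : ∀ᶠ t in nhds t1, |y i t| < dv i * M :=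
          Filter.Tendsto.eventually_lt_const hlt ((hy_cont i).abs.continuousAt)
        rw [Metric.eventually_nhds_iff] at hev
        obtain ⟨δ, hδ, hball⟩ := hev
        refine ⟨δ, hδ, fun t ht => ?_⟩
        have : dist t t1 < δ := by
          rw [Real.dist_eq, abs_of_pos (sub_pos.2 ht.1)]
          linarith [ht.2]
        exact (hball this).le
      -- the hitting case
      · -- bounds on the coupling terms at t1
        have hζnn : 0 ≤ ζ i := (hζς_pos i).1.le
        have hςnn : 0 ≤ ς i := (hζς_pos i).2.le
        have hU : |S.U x i t1| ≤ ∑ p : Fin (P+1), ∑ j : Fin (n+1), ∑ l : Fin (n+1),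
            |S.c i j l p t1| * (|S.h i j l p 0 0| + γ1 i j l p * (aU j * (dv j * M))
              + γ2 i j l p * (aU l * (dv l * M))) := by
          rw [CGData.U]
          refine cg_abs_sum3 _ _ fun p j l => ?_
          rw [abs_mul]
          refine mul_le_mul_of_nonneg_left ?_ (abs_nonneg _)
          set u1 := x j (t1 - S.τ i j p t1)
          set u2 := x l (t1 - S.σ i l p t1)
          have h1 := hh_lip i j l p u1 u2 0 0
          rw [sub_zero, sub_zero] at h1
          have h4 : |S.h i j l p u1 u2| ≤ |S.h i j l p u1 u2 - S.h i j l p 0 0|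
              + |S.h i j l p 0 0| := by
            have := abs_add_le (S.h i j l p u1 u2 - S.h i j l p 0 0) (S.h i j l p 0 0)
            simpa using this
          have h2 : |u1| ≤ aU j * (dv j * M) := by
            apply hpastX j _ (by linarith [hτ_nn i j p t1 ht1_0] : t1 - S.τ i j p t1 ≤ t1)
          have h3 : |u2| ≤ aU l * (dv l * M) := by
            apply hpastX l _ (by linarith [hσ_nn i l p t1 ht1_0] : t1 - S.σ i l p t1 ≤ t1)
          have h5 := mul_le_mul_of_nonneg_left h2 (h5pos i j l p).1.le
          have h6 := mul_le_mul_of_nonneg_left h3 (h5pos i j l p).2.1.le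
          linarith
        have hV : |S.V x i t1| ≤ ∑ p : Fin (P+1), ∑ j : Fin (n+1), ∑ l : Fin (n+1),
            |S.d i j l p t1| * (|S.f i j l p 0 0|
              + μ1 i j l p * (|S.g i j p 0| + ξ i j p * (aU j * (dv j * M)))
              + μ2 i j l p * (|S.G i l p 0| + Ξ i l p * (aU l * (dv l * M)))) := by
          rw [CGData.V]
          refine cg_abs_sum3 _ _ fun p j l => ?_
          rw [abs_mul]
          refine mul_le_mul_of_nonneg_left ?_ (abs_nonneg _)
          set p1 := ∫ s in Set.Iic (0:ℝ), S.g i j p (x j (t1 + s)) ∂(S.η i j p) with hp1def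
          set q1 := ∫ s in Set.Iic (0:ℝ), S.G i l p (x l (t1 + s)) ∂(S.ρ i l p) with hq1def
          have hp1 : |p1| ≤ |S.g i j p 0| + ξ i j p * (aU j * (dv j * M)) := by
            rw [hp1def]
            apply hint_bd _ _ ((hg_cont i j p).comp ((hx_cont j).comp
              (continuous_const.add continuous_id)))
              (hprob _ (hη i j p).1 (hη i j p).2)
            intro s hs
            simp only [Function.comp_apply, id_eq]
            change |S.g i j p (x j (t1 + s))| ≤ _
            have hss : s ≤ 0 := Set.mem_Iic.1 hs
            have hxs : |x j (t1 + s)| ≤ aU j * (dv j * M) :=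
              hpastX j (t1 + s) (by linarith)
            have hgl := hg_lip i j p (x j (t1 + s)) 0
            rw [sub_zero] at hgl
            have h4 : |S.g i j p (x j (t1 + s))| ≤ |S.g i j p (x j (t1 + s)) - S.g i j p 0|
                + |S.g i j p 0| := by
              have := abs_add_le (S.g i j p (x j (t1 + s)) - S.g i j p 0) (S.g i j p 0)
              simpa using this
            have h5 := mul_le_mul_of_nonneg_left hxs (hξ_pos i j p).le
            linarith
          have hq1 : |q1| ≤ |S.G i l p 0| + Ξ i l p * (aU l * (dv l * M)) := by
            rw [hq1def]
            apply hint_bd _ _ ((hG_cont i l p).comp ((hx_cont l).comp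
              (continuous_const.add continuous_id)))
              (hprob _ (hρ i l p).1 (hρ i l p).2)
            intro s hs
            simp only [Function.comp_apply, id_eq]
            change |S.G i l p (x l (t1 + s))| ≤ _
            have hss : s ≤ 0 := Set.mem_Iic.1 hs
            have hxs : |x l (t1 + s)| ≤ aU l * (dv l * M) :=
              hpastX l (t1 + s) (by linarith)
            have hGl := hG_lip i l p (x l (t1 + s)) 0
            rw [sub_zero] at hGl
            have h4 : |S.G i l p (x l (t1 + s))| ≤ |S.G i l p (x l (t1 + s)) - S.G i l p 0|
                + |S.G i l p 0| := by
              have := abs_add_le (S.G i l p (x l (t1 + s)) - S.G i l p 0) (S.G i l p 0)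
              simpa using this
            have h5 := mul_le_mul_of_nonneg_left hxs (hΞ_pos i l p).le
            linarith
          have h1 := hf_lip i j l p p1 q1 0 0
          rw [sub_zero, sub_zero] at h1
          have h4 : |S.f i j l p p1 q1| ≤ |S.f i j l p p1 q1 - S.f i j l p 0 0|
              + |S.f i j l p 0 0| := by
            have := abs_add_le (S.f i j l p p1 q1 - S.f i j l p 0 0) (S.f i j l p 0 0)
            simpa using this
          have h5 := mul_le_mul_of_nonneg_left hp1 (h5pos i j l p).2.2.1.le
          have h6 := mul_le_mul_of_nonneg_left hq1 (h5pos i j l p).2.2.2.le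
          linarith
        -- combined coupling bound
        have hUV : ζ i * |S.U x i t1| + ς i * |S.V x i t1|
            ≤ Sg i t1 * M + (K i - Cb0 i - CI i - |S.F i 0 0|) := by
          have hKi : K i = Cb0 i + CI i + |S.F i 0 0|
              + (∑ p : Fin (P+1), ∑ j : Fin (n+1), ∑ l : Fin (n+1),
                  ζ i * Cc i j l p * |S.h i j l p 0 0|)
              + (∑ p : Fin (P+1), ∑ j : Fin (n+1), ∑ l : Fin (n+1),
                  ς i * Cd i j l p * (|S.f i j l p 0 0| + μ1 i j l p * |S.g i j p 0|
                    + μ2 i j l p * |S.G i l p 0|)) := by simp only [hKdef]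
          have step : ζ i * (∑ p : Fin (P+1), ∑ j : Fin (n+1), ∑ l : Fin (n+1),
              |S.c i j l p t1| * (|S.h i j l p 0 0| + γ1 i j l p * (aU j * (dv j * M))
                + γ2 i j l p * (aU l * (dv l * M))))
              + ς i * (∑ p : Fin (P+1), ∑ j : Fin (n+1), ∑ l : Fin (n+1),
              |S.d i j l p t1| * (|S.f i j l p 0 0|
                + μ1 i j l p * (|S.g i j p 0| + ξ i j p * (aU j * (dv j * M)))
                + μ2 i j l p * (|S.G i l p 0| + Ξ i l p * (aU l * (dv l * M)))))
              ≤ Sg i t1 * M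
              + (∑ p : Fin (P+1), ∑ j : Fin (n+1), ∑ l : Fin (n+1),
                  ζ i * Cc i j l p * |S.h i j l p 0 0|)
              + (∑ p : Fin (P+1), ∑ j : Fin (n+1), ∑ l : Fin (n+1),
                  ς i * Cd i j l p * (|S.f i j l p 0 0| + μ1 i j l p * |S.g i j p 0|
                    + μ2 i j l p * |S.G i l p 0|)) := by
            rw [hSgdef]
            simp only [Finset.mul_sum, Finset.sum_mul, ← Finset.sum_add_distrib]
            refine Finset.sum_le_sum fun p _ => Finset.sum_le_sum fun j _ =>
              Finset.sum_le_sum fun l _ => ?_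
            have hc1 : |S.c i j l p t1| ≤ Cc i j l p := hCc i j l p t1 ht1_0
            have hd1 : |S.d i j l p t1| ≤ Cd i j l p := hCd i j l p t1 ht1_0
            have hQnn : 0 ≤ |S.f i j l p 0 0| + μ1 i j l p * |S.g i j p 0|
                + μ2 i j l p * |S.G i l p 0| :=
              add_nonneg (add_nonneg (abs_nonneg _)
                (mul_nonneg (h5pos i j l p).2.2.1.le (abs_nonneg _)))
                (mul_nonneg (h5pos i j l p).2.2.2.le (abs_nonneg _))
            have e1 : ζ i * (|S.c i j l p t1| * |S.h i j l p 0 0|)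
                ≤ ζ i * (Cc i j l p * |S.h i j l p 0 0|) :=
              mul_le_mul_of_nonneg_left
                (mul_le_mul_of_nonneg_right hc1 (abs_nonneg _)) hζnn
            have e2 : ς i * (|S.d i j l p t1| * (|S.f i j l p 0 0|
                + μ1 i j l p * |S.g i j p 0| + μ2 i j l p * |S.G i l p 0|))
                ≤ ς i * (Cd i j l p * (|S.f i j l p 0 0|
                + μ1 i j l p * |S.g i j p 0| + μ2 i j l p * |S.G i l p 0|)) :=
              mul_le_mul_of_nonneg_left (mul_le_mul_of_nonneg_right hd1 hQnn) hςnn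
            linarith [e1, e2]
          have m1 : ζ i * |S.U x i t1| ≤ ζ i * (∑ p : Fin (P+1), ∑ j : Fin (n+1),
              ∑ l : Fin (n+1), |S.c i j l p t1| * (|S.h i j l p 0 0|
                + γ1 i j l p * (aU j * (dv j * M)) + γ2 i j l p * (aU l * (dv l * M)))) :=
            mul_le_mul_of_nonneg_left hU hζnn
          have m2 : ς i * |S.V x i t1| ≤ ς i * (∑ p : Fin (P+1), ∑ j : Fin (n+1),
              ∑ l : Fin (n+1), |S.d i j l p t1| * (|S.f i j l p 0 0|
                + μ1 i j l p * (|S.g i j p 0| + ξ i j p * (aU j * (dv j * M)))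
                + μ2 i j l p * (|S.G i l p 0| + Ξ i l p * (aU l * (dv l * M))))) :=
            mul_le_mul_of_nonneg_left hV hςnn
          rw [hKi]
          linarith
        -- derivative facts at t1
        have hxd := hx_ode i t1 ht₀t1
        have hH' : HasDerivAt (fun v => ∫ u in (0:ℝ)..v, (aT i t1 u)⁻¹)
            ((aT i t1 (x i t1))⁻¹) (x i t1) :=
          intervalIntegral.integral_hasDerivAt_right
            ((hinv_cont i t1).intervalIntegrable 0 (x i t1))
            ((hinv_cont i t1).stronglyMeasurable.stronglyMeasurableAtFilter)
            (hinv_cont i t1).continuousAt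
        have hcomp : HasDerivAt (fun t => H i t1 (x i t))
            ((aT i t1 (x i t1))⁻¹ * S.rhs x i t1) t1 := by
          have := HasDerivAt.comp t1 hH' hxd
          exact this
        have hr' : HasDerivAt (fun t => ∫ s in t1..t, Ah i s) (Ah i t1) t1 :=
          intervalIntegral.integral_hasDerivAt_right
            ((hAh_cont i).intervalIntegrable t1 t1)
            ((hAh_cont i).stronglyMeasurable.stronglyMeasurableAtFilter)
            (hAh_cont i).continuousAt
        set Gf : ℝ → ℝ := fun t => H i t1 (x i t) - x i t * (∫ s in t1..t, Ah i s)
          with hGfdef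
        have hGf' : HasDerivAt Gf ((aT i t1 (x i t1))⁻¹ * S.rhs x i t1
            - x i t1 * Ah i t1) t1 := by
          have := hcomp.sub (hxd.mul hr')
          simp only [intervalIntegral.integral_same, mul_zero, zero_add] at this
          exact this
        have haTx : aT i t1 (x i t1) = S.a i t1 (x i t1) := haTeq i t1 ht1_0 _
        have hEeq : (aT i t1 (x i t1))⁻¹ * S.rhs x i t1
            = -(S.b i t1 (x i t1)) + S.F i (S.U x i t1) (S.V x i t1) + S.I i t1 := by
          rw [haTx, CGData.rhs, inv_mul_cancel_left₀ (ha_pos i t1 ht1_0 (x i t1)).ne']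
        have hGft1 : Gf t1 = y i t1 := by
          simp only [hGfdef, intervalIntegral.integral_same, mul_zero, sub_zero]
          rfl
        have hFabs : |S.F i (S.U x i t1) (S.V x i t1)| ≤ |S.F i 0 0|
            + ζ i * |S.U x i t1| + ς i * |S.V x i t1| := by
          have h1 := hF_lip i (S.U x i t1) (S.V x i t1) 0 0
          rw [sub_zero, sub_zero] at h1
          have h4 : |S.F i (S.U x i t1) (S.V x i t1)|
              ≤ |S.F i (S.U x i t1) (S.V x i t1) - S.F i 0 0| + |S.F i 0 0| := by
            have := abs_add_le (S.F i (S.U x i t1) (S.V x i t1) - S.F i 0 0) (S.F i 0 0)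
            simpa using this
          linarith
        have habsI := abs_le.1 (hCI i t1 ht1_0)
        have habsb0 := abs_le.1 (hCb0 i t1 ht1_0)
        have hβAh1 := hβAh i t1 ht1_0
        have hβAh1nn := hβAh_nn i t1 ht1_0
        have hq : (β i t1 + Ah i t1) * (aL i * (dv i * M))
            = Sg i t1 * M + ε * (dv i * M) := by
          calc (β i t1 + Ah i t1) * (aL i * (dv i * M))
              = ((β i t1 + Ah i t1) * aL i) * (dv i * M) := by ring
            _ = (Sg i t1 / dv i + ε) * (dv i * M) := by rw [hβAh1]
            _ = Sg i t1 * M + ε * (dv i * M) := by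
                have hdvne : dv i ≠ 0 := (hdv_pos i).ne'
                field_simp
        -- split on the sign of the hit
        rcases (abs_eq (hdvM_pos i).le).1 heq with hy1 | hy1
        · -- positive hit
          have hyx : aL i * y i t1 ≤ x i t1 := hxy_pos i t1 (by rw [hy1]; exact hdvM_pos i)
          have hx1 : aL i * (dv i * M) ≤ x i t1 := by
            rw [hy1] at hyx; linarith [hyx]
          have hx1_pos : 0 < x i t1 :=
            lt_of_lt_of_le (mul_pos (haL_pos i) (hdvM_pos i)) hx1
          have hbb : β i t1 * x i t1 + S.b i t1 0 ≤ S.b i t1 (x i t1) := by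
            have h := hβ i t1 ht1_0 (x i t1) 0 hx1_pos.ne'
            rw [sub_zero] at h
            rw [le_div_iff₀ hx1_pos] at h
            linarith
          have hmul : (β i t1 + Ah i t1) * (aL i * (dv i * M))
              ≤ (β i t1 + Ah i t1) * x i t1 :=
            mul_le_mul_of_nonneg_left hx1 hβAh1nn
          have hFup : S.F i (S.U x i t1) (S.V x i t1) ≤ |S.F i 0 0|
              + ζ i * |S.U x i t1| + ς i * |S.V x i t1| :=
            le_trans (le_abs_self _) hFabs
          have hg'neg : (aT i t1 (x i t1))⁻¹ * S.rhs x i t1 - x i t1 * Ah i t1 < 0 := by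
            rw [hEeq]
            have hKM := hMK i
            linarith [hbb, hmul, hq, hFup, hUV, habsI.2, habsb0.1]
          obtain ⟨δ1, hδ1, hdec⟩ := cg_local_decrease hGf' hg'neg
          have hevx : ∀ᶠ t in nhds t1, 0 < x i t :=
            Filter.Tendsto.eventually_const_lt hx1_pos (hx_cont i).continuousAt
          rw [Metric.eventually_nhds_iff] at hevx
          obtain ⟨δ2, hδ2, hballx⟩ := hevx
          have hylb : -(dv i * M) < y i t1 := by rw [hy1]; linarith [hdvM_pos i]
          have hevy : ∀ᶠ t in nhds t1, -(dv i * M) < y i t :=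
            Filter.Tendsto.eventually_const_lt hylb (hy_cont i).continuousAt
          rw [Metric.eventually_nhds_iff] at hevy
          obtain ⟨δ3, hδ3, hbally⟩ := hevy
          refine ⟨min δ1 (min δ2 δ3), lt_min hδ1 (lt_min hδ2 hδ3), fun t ht => ?_⟩
          have htd : 0 < t - t1 := sub_pos.2 ht.1
          have hdist : dist t t1 < min δ2 δ3 := by
            rw [Real.dist_eq, abs_of_pos htd]
            have := ht.2
            have h2 : min δ1 (min δ2 δ3) ≤ min δ2 δ3 := min_le_right _ _
            linarith
          have hxt_pos : 0 < x i t := hballx (lt_of_lt_of_le hdist (min_le_left _ _))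
          have hyt_lb : -(dv i * M) < y i t := hbally (lt_of_lt_of_le hdist (min_le_right _ _))
          have htIoo : t ∈ Set.Ioo t1 (t1 + δ1) := by
            constructor
            · exact ht.1
            · have := ht.2
              have h2 : min δ1 (min δ2 δ3) ≤ δ1 := min_le_left _ _
              linarith
          have hGdec : Gf t < Gf t1 := hdec t htIoo
          have hterm := (hterm1 i t1 t (x i t) ht1T ht.1.le).1 hxt_pos.le
          have hyle : y i t ≤ Gf t := by
            have hye : y i t = H i t (x i t) := rfl
            simp only [hGfdef]
            rw [hye]
            linarith [hterm]
          have : y i t < dv i * M := by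
            rw [← hy1, ← hGft1]
            exact lt_of_le_of_lt hyle hGdec
          exact abs_le.2 ⟨hyt_lb.le, this.le⟩
        · -- negative hit
          have hy1' : y i t1 < 0 := by rw [hy1]; linarith [hdvM_pos i]
          have hyx : x i t1 ≤ aL i * y i t1 := hxy_neg i t1 hy1'
          have hx1 : x i t1 ≤ -(aL i * (dv i * M)) := by
            rw [hy1] at hyx
            linarith [hyx]
          have hx1_neg : x i t1 < 0 :=
            lt_of_le_of_lt hx1 (by linarith [mul_pos (haL_pos i) (hdvM_pos i)])
          have hbb : S.b i t1 (x i t1) ≤ β i t1 * x i t1 + S.b i t1 0 := by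
            have h := hβ i t1 ht1_0 (x i t1) 0 hx1_neg.ne
            rw [sub_zero] at h
            rw [le_div_iff_of_neg hx1_neg] at h
            linarith
          have hmul : (β i t1 + Ah i t1) * (aL i * (dv i * M))
              ≤ (β i t1 + Ah i t1) * (-(x i t1)) :=
            mul_le_mul_of_nonneg_left (by linarith) hβAh1nn
          have hFlow : -(|S.F i 0 0| + ζ i * |S.U x i t1| + ς i * |S.V x i t1|)
              ≤ S.F i (S.U x i t1) (S.V x i t1) := by
            have := neg_abs_le (S.F i (S.U x i t1) (S.V x i t1))
            linarith [hFabs]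
          have hg'pos : 0 < (aT i t1 (x i t1))⁻¹ * S.rhs x i t1 - x i t1 * Ah i t1 := by
            rw [hEeq]
            have hKM := hMK i
            linarith [hbb, hmul, hq, hFlow, hUV, habsI.1, habsb0.2]
          have hGfneg : HasDerivAt (fun t => -(Gf t))
              (-((aT i t1 (x i t1))⁻¹ * S.rhs x i t1 - x i t1 * Ah i t1)) t1 := hGf'.neg
          obtain ⟨δ1, hδ1, hdec⟩ := cg_local_decrease hGfneg (by linarith)
          have hevx : ∀ᶠ t in nhds t1, x i t < 0 :=
            Filter.Tendsto.eventually_lt_const hx1_neg (hx_cont i).continuousAt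
          rw [Metric.eventually_nhds_iff] at hevx
          obtain ⟨δ2, hδ2, hballx⟩ := hevx
          have hyub : y i t1 < dv i * M := by rw [hy1]; linarith [hdvM_pos i]
          have hevy : ∀ᶠ t in nhds t1, y i t < dv i * M :=
            Filter.Tendsto.eventually_lt_const hyub (hy_cont i).continuousAt
          rw [Metric.eventually_nhds_iff] at hevy
          obtain ⟨δ3, hδ3, hbally⟩ := hevy
          refine ⟨min δ1 (min δ2 δ3), lt_min hδ1 (lt_min hδ2 hδ3), fun t ht => ?_⟩
          have htd : 0 < t - t1 := sub_pos.2 ht.1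
          have hdist : dist t t1 < min δ2 δ3 := by
            rw [Real.dist_eq, abs_of_pos htd]
            have := ht.2
            have h2 : min δ1 (min δ2 δ3) ≤ min δ2 δ3 := min_le_right _ _
            linarith
          have hxt_neg : x i t < 0 := hballx (lt_of_lt_of_le hdist (min_le_left _ _))
          have hyt_ub : y i t < dv i * M := hbally (lt_of_lt_of_le hdist (min_le_right _ _))
          have htIoo : t ∈ Set.Ioo t1 (t1 + δ1) := by
            constructor
            · exact ht.1
            · have := ht.2
              have h2 : min δ1 (min δ2 δ3) ≤ δ1 := min_le_left _ _
              linarith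
          have hGinc : Gf t1 < Gf t := by
            have := hdec t htIoo
            linarith
          have hterm := (hterm1 i t1 t (x i t) ht1T ht.1.le).2 hxt_neg.le
          have hyge : Gf t ≤ y i t := by
            have hye : y i t = H i t (x i t) := rfl
            simp only [hGfdef]
            rw [hye]
            linarith [hterm]
          have : -(dv i * M) < y i t := by
            rw [← hy1, ← hGft1]
            exact lt_of_lt_of_le hGinc hyge
          exact abs_le.2 ⟨this.le, hyt_ub.le⟩
    -- derive the contradiction from local goodness
    choose δs hδpos hδ using hlocal
    set δm : ℝ := Finset.univ.inf' Finset.univ_nonempty δs with hδmdef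
    have hδm_pos : 0 < δm := (Finset.lt_inf'_iff _).2 fun i _ => hδpos i
    obtain ⟨s, hsB, hslt⟩ := exists_lt_of_csInf_lt hBne
      (show sInf B < t1 + δm by rw [← ht1def]; linarith)
    have hst1 : t1 ≤ s := csInf_le hBbd hsB
    obtain ⟨i, hi⟩ := hsB.2
    rcases eq_or_lt_of_le hst1 with heqs | hlts
    · rw [← heqs] at hi
      exact absurd (ht1good i) (not_le.2 hi)
    · have hδsi : δm ≤ δs i := Finset.inf'_le _ (Finset.mem_univ i)
      have := hδ i s ⟨hlts, by linarith⟩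
      exact absurd this (not_le.2 hi)
  -- final assembly
  refine ⟨Bx + ∑ i, aU i * (dv i * M), fun i t => ?_⟩
  have hnn2 : (0:ℝ) ≤ ∑ i, aU i * (dv i * M) :=
    Finset.sum_nonneg fun j _ => mul_nonneg (haU_pos j).le
      (mul_nonneg (hdv_pos j).le hM_pos.le)
  rcases le_or_gt t T with h | h
  · exact (hBx i t h).trans (le_add_of_nonneg_right hnn2)
  · have h1 : |x i t| ≤ aU i * (dv i * M) :=
      (habs_x i t).trans (mul_le_mul_of_nonneg_left (main t h.le i) (haU_pos i).le)
    have h2 : aU i * (dv i * M) ≤ ∑ j, aU j * (dv j * M) :=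
      Finset.single_le_sum (fun j _ => mul_nonneg (haU_pos j).le
        (mul_nonneg (hdv_pos j).le hM_pos.le)) (Finset.mem_univ i)
    linarith
end
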